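/- arXiv:2108.10866 — 4 statements merged into one kernel-verified Lean document; each statement's English description precedes it below -/
import Mathlib

section
/- Let 0 < π₁ < π₂ < 1. Then the map n ↦ y(n, π₂) − y(n, π₁) is nondecreasing in n ∈ ℕ; that is, the level curves spread out along the time axis. -/
open MeasureTheory Real Set Filter

/-- The natural parameter domain of the exponential family generated by `ν`. -/
def expDom (ν : Measure ℝ) : Set ℝ :=
  {u : ℝ | Integrable (fun x => Real.exp (u * x)) ν}

/-- The cumulant generating function `B(u) = log ∫ e^{u x} dν(x)`. -/
noncomputable def cgf (ν : Measure ℝ) (u : ℝ) : ℝ :=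
  Real.log (∫ x, Real.exp (u * x) ∂ν)

/-- The (topological) support of a measure: points all of whose neighbourhoods
have nonzero measure. -/
def msupport (μ : MeasureTheory.Measure ℝ) : Set ℝ :=
  {x : ℝ | ∀ U ∈ nhds x, μ U ≠ 0}

/-- The normalizing constant `Z(n,y) = ∫ e^{uy - nB(u)} dμ(u)`. -/
noncomputable def Z (ν μ : Measure ℝ) (n : ℕ) (y : ℝ) : ℝ :=
  ∫ u, Real.exp (u * y - (n : ℝ) * cgf ν u) ∂μ

/-- The posterior probability `q(n,y) = P(Θ > θ₀ | Y_n = y)`. -/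
noncomputable def q (ν μ : Measure ℝ) (θ₀ : ℝ) (n : ℕ) (y : ℝ) : ℝ :=
  (∫ u in Set.Ioi θ₀, Real.exp (u * y - (n : ℝ) * cgf ν u) ∂μ) / Z ν μ n y

namespace LCS

/-- The tilted integrand. -/
noncomputable def W (ν : Measure ℝ) (c y u : ℝ) : ℝ := Real.exp (u * y - c * cgf ν u)

lemma W_pos {ν : Measure ℝ} {c y u : ℝ} : 0 < W ν c y u := Real.exp_pos _

lemma measurable_cgf (ν : Measure ℝ) [SigmaFinite ν] : Measurable (cgf ν) := by
  have h : StronglyMeasurable (Function.uncurry fun (u : ℝ) (x : ℝ) => Real.exp (u * x)) := by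
    apply Continuous.stronglyMeasurable
    exact (continuous_fst.mul continuous_snd).rexp
  have h2 := h.integral_prod_right (ν := ν)
  exact Real.measurable_log.comp h2.measurable

lemma measurable_W {ν : Measure ℝ} [SigmaFinite ν] (c y : ℝ) : Measurable (W ν c y) := by
  apply Measurable.exp
  exact (measurable_id.mul_const y).sub ((measurable_cgf ν).const_mul c)

/-- Nullity of the complement of the support. -/
lemma msupport_compl_null (μ : Measure ℝ) : μ (msupport μ)ᶜ = 0 := by
  set S : Set (Set ℝ) := {V : Set ℝ | IsOpen V ∧ μ V = 0}
  obtain ⟨T, hTc, hTS, hTU⟩ := TopologicalSpace.isOpen_sUnion_countable S (fun s hs => hs.1)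
  have hU : μ (⋃₀ S) = 0 := by
    rw [← hTU]
    refine (measure_sUnion_null_iff hTc).mpr fun s hs => (hTS hs).2
  refine measure_mono_null ?_ hU
  intro x hx
  simp only [mem_compl_iff, msupport, mem_setOf_eq, not_forall] at hx
  obtain ⟨U, hU, hUnull⟩ := hx
  push_neg at hUnull
  obtain ⟨V, hVU, hVopen, hxV⟩ := mem_nhds_iff.mp hU
  exact ⟨V, ⟨hVopen, le_antisymm (hUnull ▸ measure_mono hVU) zero_le⟩, hxV⟩

lemma exists_mem_msupport {μ : Measure ℝ} {A : Set ℝ} (hA : μ A ≠ 0) :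
    (A ∩ msupport μ).Nonempty := by
  by_contra h
  rw [Set.not_nonempty_iff_eq_empty] at h
  have : A ⊆ (msupport μ)ᶜ := by
    intro x hx
    intro hxs
    exact absurd (Set.mem_inter hx hxs) (h ▸ Set.notMem_empty x)
  exact hA (measure_mono_null this (msupport_compl_null μ))

lemma convex_expDom (ν : Measure ℝ) : Convex ℝ (expDom ν) := by
  intro u hu v hv a b ha hb hab
  have hint : Integrable (fun x => Real.exp (u * x) + Real.exp (v * x)) ν := hu.add hv
  refine hint.mono' ?_ ?_
  · exact ((continuous_const.mul continuous_id).rexp).aestronglyMeasurable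
  · refine Filter.Eventually.of_forall fun x => ?_
    rw [Real.norm_eq_abs, abs_of_pos (Real.exp_pos _)]
    have h1 : (a * u + b * v) * x ≤ max (u * x) (v * x) := by
      calc (a * u + b * v) * x = a * (u * x) + b * (v * x) := by ring
      _ ≤ a * max (u * x) (v * x) + b * max (u * x) (v * x) := by
          gcongr
          · exact le_max_left _ _
          · exact le_max_right _ _
      _ = max (u * x) (v * x) := by rw [← add_mul, hab, one_mul]
    show Real.exp ((a * u + b * v) * x) ≤ _
    calc Real.exp ((a * u + b * v) * x) ≤ Real.exp (max (u * x) (v * x)) := Real.exp_le_exp.mpr h1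
      _ ≤ Real.exp (u * x) + Real.exp (v * x) := by
          rcases max_cases (u * x) (v * x) with ⟨h, _⟩ | ⟨h, _⟩ <;> rw [h]
          · linarith [Real.exp_pos (v * x)]
          · linarith [Real.exp_pos (u * x)]




lemma int_absxexp {ν : Measure ℝ} {u : ℝ} (hu : u ∈ interior (expDom ν)) :
    Integrable (fun x => |x| * Real.exp (u * x)) ν := by
  obtain ⟨ε, hε, hball⟩ := Metric.isOpen_iff.mp isOpen_interior u hu
  have h1 : u + ε / 2 ∈ expDom ν := interior_subset (hball (by
    rw [Metric.mem_ball, Real.dist_eq, show u + ε/2 - u = ε/2 by ring,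
      abs_of_pos (half_pos hε)]; linarith))
  have h2 : u - ε / 2 ∈ expDom ν := interior_subset (hball (by
    rw [Metric.mem_ball, Real.dist_eq, show u - ε/2 - u = -(ε/2) by ring,
      abs_neg, abs_of_pos (half_pos hε)]; linarith))
  have hint : Integrable (fun x => (2 / ε) * (Real.exp ((u + ε/2) * x) + Real.exp ((u - ε/2) * x))) ν :=
    (Integrable.add h1 h2).const_mul _
  refine hint.mono' ?_ ?_
  · exact (measurable_abs.mul ((measurable_const.mul measurable_id).exp)).aestronglyMeasurable
  · refine Filter.Eventually.of_forall fun x => ?_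
    rw [Real.norm_eq_abs, abs_of_nonneg (by positivity)]
    have key : |x| ≤ (2 / ε) * (Real.exp ((ε/2) * x) + Real.exp (-((ε/2) * x))) := by
      have h3 : (ε/2) * |x| ≤ Real.exp ((ε/2) * |x|) := by
        linarith [Real.add_one_le_exp ((ε/2) * |x|)]
      have h4 : Real.exp ((ε/2) * |x|) ≤ Real.exp ((ε/2) * x) + Real.exp (-((ε/2) * x)) := by
        rcases abs_cases x with ⟨h, _⟩ | ⟨h, _⟩
        · rw [h]; linarith [Real.exp_pos (-((ε/2) * x))]
        · rw [h, mul_neg]; linarith [Real.exp_pos ((ε/2) * x)]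
      have hε2 : (0:ℝ) < ε / 2 := half_pos hε
      calc |x| = (2/ε) * ((ε/2) * |x|) := by field_simp
        _ ≤ (2/ε) * (Real.exp ((ε/2) * x) + Real.exp (-((ε/2) * x))) :=
            mul_le_mul_of_nonneg_left (le_trans h3 h4) (by positivity)
    have e1 : Real.exp ((ε/2) * x) * Real.exp (u*x) = Real.exp ((u+ε/2)*x) := by
      rw [← Real.exp_add]; ring_nf
    have e2 : Real.exp (-((ε/2) * x)) * Real.exp (u*x) = Real.exp ((u-ε/2)*x) := by
      rw [← Real.exp_add]; ring_nf
    calc |x| * Real.exp (u * x)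
        ≤ ((2 / ε) * (Real.exp ((ε/2) * x) + Real.exp (-((ε/2) * x)))) * Real.exp (u * x) :=
          mul_le_mul_of_nonneg_right key (le_of_lt (Real.exp_pos _))
      _ = (2 / ε) * (Real.exp ((ε/2) * x) * Real.exp (u*x) + Real.exp (-((ε/2) * x)) * Real.exp (u*x)) := by ring
      _ = (2 / ε) * (Real.exp ((u + ε/2) * x) + Real.exp ((u - ε/2) * x)) := by rw [e1, e2]

lemma int_xexp {ν : Measure ℝ} {u : ℝ} (hu : u ∈ interior (expDom ν)) :
    Integrable (fun x => x * Real.exp (u * x)) ν := by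
  refine (int_absxexp hu).mono' ?_ ?_
  · exact (measurable_id.mul ((measurable_const.mul measurable_id).exp)).aestronglyMeasurable
  · exact Filter.Eventually.of_forall fun x => le_of_eq (by
      rw [Real.norm_eq_abs, abs_mul, abs_of_pos (Real.exp_pos _)])

noncomputable def Mgf (ν : Measure ℝ) (u : ℝ) : ℝ := ∫ x, Real.exp (u * x) ∂ν
noncomputable def Mgf' (ν : Measure ℝ) (u : ℝ) : ℝ := ∫ x, x * Real.exp (u * x) ∂ν

lemma Mgf_pos {ν : Measure ℝ} (hν : ν ≠ 0) {u : ℝ} (hu : u ∈ expDom ν) : 0 < Mgf ν u := by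
  have hi : Integrable (fun x => Real.exp (u*x)) ν := hu
  rw [Mgf, integral_pos_iff_support_of_nonneg (fun x => (Real.exp_pos _).le) hi]
  have hs : (Function.support fun x => Real.exp (u * x)) = Set.univ := by
    ext x; simp [Function.support, Real.exp_ne_zero]
  rw [hs]
  exact Measure.measure_univ_pos.mpr hν

lemma hasDerivAt_Mgf {ν : Measure ℝ} [SigmaFinite ν] {u : ℝ} (hu : u ∈ interior (expDom ν)) :
    HasDerivAt (Mgf ν) (Mgf' ν u) u := by
  obtain ⟨ε, hε, hball⟩ := Metric.isOpen_iff.mp isOpen_interior u hu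
  have h1 : u + ε / 2 ∈ interior (expDom ν) := hball (by
    rw [Metric.mem_ball, Real.dist_eq, show u + ε/2 - u = ε/2 by ring,
      abs_of_pos (half_pos hε)]; linarith)
  have h2 : u - ε / 2 ∈ interior (expDom ν) := hball (by
    rw [Metric.mem_ball, Real.dist_eq, show u - ε/2 - u = -(ε/2) by ring,
      abs_neg, abs_of_pos (half_pos hε)]; linarith)
  have hu' : Integrable (fun x => Real.exp (u*x)) ν := (interior_subset hu : u ∈ expDom ν)
  set bound : ℝ → ℝ := fun x => |x| * Real.exp ((u + ε/2) * x) + |x| * Real.exp ((u - ε/2) * x) with hbdef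
  have hbound : Integrable bound ν := (int_absxexp h1).add (int_absxexp h2)
  have hmeas : ∀ c : ℝ, AEStronglyMeasurable (fun x => Real.exp (c * x)) ν := fun c =>
    ((measurable_const.mul measurable_id).exp).aestronglyMeasurable
  have key := hasDerivAt_integral_of_dominated_loc_of_lip (μ := ν)
    (F := fun c x => Real.exp (c * x)) (F' := fun x => x * Real.exp (u * x))
    (x₀ := u) (s := Metric.ball u (ε/2)) (bound := bound) (Metric.ball_mem_nhds u (half_pos hε))
    (Filter.Eventually.of_forall fun c => hmeas c)
    hu'
    ((measurable_id.mul ((measurable_const.mul measurable_id).exp)).aestronglyMeasurable)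
    ?_ hbound
    (Filter.Eventually.of_forall fun x => by
      simpa [mul_comm] using ((hasDerivAt_id u).mul_const x).exp)
  · exact key.2
  · refine Filter.Eventually.of_forall fun x => ?_
    have hconv : Convex ℝ (Metric.ball u (ε/2)) := convex_ball u (ε/2)
    refine Convex.lipschitzOnWith_of_nnnorm_hasDerivWithin_le (f' := fun c => x * Real.exp (c * x)) hconv ?_ ?_
    · intro c hc
      have hd : HasDerivAt (fun c => Real.exp (c * x)) (x * Real.exp (c * x)) c := by
        simpa [mul_comm] using ((hasDerivAt_id c).mul_const x).exp
      exact hd.hasDerivWithinAt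
    · intro c hc
      rw [Metric.mem_ball, Real.dist_eq] at hc
      have hcx : c * x ≤ (u + ε/2) * x ∨ c * x ≤ (u - ε/2) * x := by
        rcases le_or_gt 0 x with hx | hx
        · left; nlinarith [abs_lt.mp hc]
        · right; nlinarith [abs_lt.mp hc]
      have hex : Real.exp (c * x) ≤ Real.exp ((u + ε/2) * x) + Real.exp ((u - ε/2) * x) := by
        rcases hcx with h | h
        · linarith [Real.exp_le_exp.mpr h, Real.exp_pos ((u - ε/2) * x)]
        · linarith [Real.exp_le_exp.mpr h, Real.exp_pos ((u + ε/2) * x)]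
      have : ‖x * Real.exp (c * x)‖ ≤ bound x := by
        rw [Real.norm_eq_abs, abs_mul, abs_of_pos (Real.exp_pos _), hbdef]
        calc |x| * Real.exp (c*x) ≤ |x| * (Real.exp ((u + ε/2) * x) + Real.exp ((u - ε/2) * x)) :=
              mul_le_mul_of_nonneg_left hex (abs_nonneg x)
          _ = _ := by ring
      calc ‖x * Real.exp (c * x)‖₊ ≤ ‖bound x‖₊ := by
            rw [← NNReal.coe_le_coe, coe_nnnorm, coe_nnnorm]
            exact le_trans this (le_abs_self _)
        _ = Real.nnabs (bound x) := by
            ext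
            simp [Real.coe_nnabs, Real.norm_eq_abs]




lemma hasDerivAt_cgf {ν : Measure ℝ} [SigmaFinite ν] {u : ℝ} (hu : u ∈ interior (expDom ν)) :
    HasDerivAt (cgf ν) (Mgf' ν u / Mgf ν u) u := by
  by_cases hν : ν = 0
  · subst hν
    have h1 : cgf (0 : Measure ℝ) = fun _ => 0 := by
      funext w; simp [cgf]
    have h2 : Mgf' (0 : Measure ℝ) u / Mgf 0 u = 0 := by simp [Mgf, Mgf']
    rw [h1, h2]; exact hasDerivAt_const u 0
  · exact (hasDerivAt_Mgf hu).log (ne_of_gt (Mgf_pos hν (interior_subset hu)))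

lemma deriv_cgf_eq {ν : Measure ℝ} [SigmaFinite ν] {u : ℝ} (hu : u ∈ interior (expDom ν)) :
    deriv (cgf ν) u = Mgf' ν u / Mgf ν u := (hasDerivAt_cgf hu).deriv

lemma hasDerivAt_cgf' {ν : Measure ℝ} [SigmaFinite ν] {u : ℝ} (hu : u ∈ interior (expDom ν)) :
    HasDerivAt (cgf ν) (deriv (cgf ν) u) u := by
  rw [deriv_cgf_eq hu]; exact hasDerivAt_cgf hu

lemma deriv_cgf_mono {ν : Measure ℝ} [SigmaFinite ν] {u v : ℝ} (hu : u ∈ interior (expDom ν))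
    (hv : v ∈ interior (expDom ν)) (huv : u ≤ v) : deriv (cgf ν) u ≤ deriv (cgf ν) v := by
  rw [deriv_cgf_eq hu, deriv_cgf_eq hv]
  by_cases hν : ν = 0
  · subst hν; simp [Mgf, Mgf']
  · have hMu := Mgf_pos hν (interior_subset hu)
    have hMv := Mgf_pos hν (interior_subset hv)
    rw [div_le_div_iff₀ hMu hMv]
    have hxu := int_xexp hu
    have hxv := int_xexp hv
    have heu' : u ∈ expDom ν := interior_subset hu
    have hev' : v ∈ expDom ν := interior_subset hv
    have heu : Integrable (fun x => Real.exp (u * x)) ν := heu'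
    have hev : Integrable (fun x => Real.exp (v * x)) ν := hev'
    set f1 : ℝ × ℝ → ℝ := fun p => (p.1 * Real.exp (v * p.1)) * Real.exp (u * p.2) with hf1
    set f2 : ℝ × ℝ → ℝ := fun p => (p.1 * Real.exp (u * p.1)) * Real.exp (v * p.2) with hf2
    set f3 : ℝ × ℝ → ℝ := fun p => Real.exp (v * p.1) * (p.2 * Real.exp (u * p.2)) with hf3
    set f4 : ℝ × ℝ → ℝ := fun p => Real.exp (u * p.1) * (p.2 * Real.exp (v * p.2)) with hf4
    have hi1 : Integrable f1 (ν.prod ν) := hxv.mul_prod heu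
    have hi2 : Integrable f2 (ν.prod ν) := hxu.mul_prod hev
    have hi3 : Integrable f3 (ν.prod ν) := hev.mul_prod hxu
    have hi4 : Integrable f4 (ν.prod ν) := heu.mul_prod hxv
    have key : 0 ≤ ∫ p, ((f1 p - f2 p) - (f3 p - f4 p)) ∂(ν.prod ν) := by
      refine integral_nonneg fun p => ?_
      simp only [Pi.zero_apply]
      obtain ⟨x, z⟩ := p
      have hexp : Real.exp (v*x) * Real.exp (u*z) - Real.exp (u*x) * Real.exp (v*z)
          = Real.exp (v*x + u*z) - Real.exp (u*x + v*z) := by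
        rw [Real.exp_add, Real.exp_add]
      have hfact : (f1 (x,z) - f2 (x,z)) - (f3 (x,z) - f4 (x,z))
          = (x - z) * (Real.exp (v*x + u*z) - Real.exp (u*x + v*z)) := by
        simp only [hf1, hf2, hf3, hf4, ← hexp]; ring
      rw [hfact]
      rcases le_total z x with h | h
      · apply mul_nonneg (by linarith)
        have := Real.exp_le_exp.mpr (show u*x + v*z ≤ v*x + u*z by nlinarith)
        linarith
      · rw [show (x - z) * (Real.exp (v*x + u*z) - Real.exp (u*x + v*z))
            = (z - x) * (Real.exp (u*x + v*z) - Real.exp (v*x + u*z)) by ring]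
        have := Real.exp_le_exp.mpr (show v*x + u*z ≤ u*x + v*z by nlinarith)
        exact mul_nonneg (by linarith) (by linarith)
    have hi12 : Integrable (fun p => f1 p - f2 p) (ν.prod ν) := hi1.sub hi2
    have hi34 : Integrable (fun p => f3 p - f4 p) (ν.prod ν) := hi3.sub hi4
    rw [integral_sub hi12 hi34, integral_sub hi1 hi2, integral_sub hi3 hi4] at key
    simp only [hf1, hf2, hf3, hf4] at key
    have e1 : ∫ (a : ℝ × ℝ), a.1 * Real.exp (v * a.1) * Real.exp (u * a.2) ∂ν.prod ν
        = Mgf' ν v * Mgf ν u :=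
      integral_prod_mul (f := fun x => x * Real.exp (v * x)) (g := fun x => Real.exp (u * x))
    have e2 : ∫ (a : ℝ × ℝ), a.1 * Real.exp (u * a.1) * Real.exp (v * a.2) ∂ν.prod ν
        = Mgf' ν u * Mgf ν v :=
      integral_prod_mul (f := fun x => x * Real.exp (u * x)) (g := fun x => Real.exp (v * x))
    have e3 : ∫ (a : ℝ × ℝ), Real.exp (v * a.1) * (a.2 * Real.exp (u * a.2)) ∂ν.prod ν
        = Mgf ν v * Mgf' ν u :=
      integral_prod_mul (f := fun x => Real.exp (v * x)) (g := fun x => x * Real.exp (u * x))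
    have e4 : ∫ (a : ℝ × ℝ), Real.exp (u * a.1) * (a.2 * Real.exp (v * a.2)) ∂ν.prod ν
        = Mgf ν u * Mgf' ν v :=
      integral_prod_mul (f := fun x => Real.exp (u * x)) (g := fun x => x * Real.exp (v * x))
    rw [e1, e2, e3, e4] at key
    nlinarith [key]




lemma integrable_W {ν μ : Measure ℝ} [SigmaFinite ν] {c y : ℝ}
    (hi : Integrable (fun u => (1 + |u|) * Real.exp (u * y - c * cgf ν u)) μ) :
    Integrable (W ν c y) μ := by
  refine hi.mono' (measurable_W c y).aestronglyMeasurable ?_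
  refine Filter.Eventually.of_forall fun u => ?_
  rw [Real.norm_eq_abs, abs_of_pos W_pos]
  have h := Real.exp_pos (u * y - c * cgf ν u)
  have h2 := abs_nonneg u
  show Real.exp (u * y - c * cgf ν u) ≤ (1 + |u|) * Real.exp (u * y - c * cgf ν u)
  nlinarith

lemma setIntegral_W_nonneg {ν μ : Measure ℝ} {c y : ℝ} (A : Set ℝ) :
    0 ≤ ∫ u in A, W ν c y u ∂μ :=
  integral_nonneg fun u => W_pos.le

lemma setIntegral_W_pos {ν μ : Measure ℝ} [SigmaFinite ν] {c y : ℝ} {A : Set ℝ}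
    (hA : MeasurableSet A) (hμA : μ A ≠ 0) (hWi : Integrable (W ν c y) μ) :
    0 < ∫ u in A, W ν c y u ∂μ := by
  rw [integral_pos_iff_support_of_nonneg (fun u => W_pos.le) (hWi.restrict)]
  have hs : (Function.support fun u => W ν c y u) = Set.univ := by
    ext u; simp [Function.support, W, Real.exp_ne_zero]
  rw [hs, Measure.restrict_apply_univ]
  exact pos_iff_ne_zero.mpr hμA

lemma setIntegral_W_eq_zero_iff {ν μ : Measure ℝ} [SigmaFinite ν] {c y : ℝ} {A : Set ℝ}
    (hA : MeasurableSet A) (hWi : Integrable (W ν c y) μ) :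
    (∫ u in A, W ν c y u ∂μ) = 0 ↔ μ A = 0 := by
  constructor
  · intro h
    by_contra hμA
    exact absurd h (ne_of_gt (setIntegral_W_pos hA hμA hWi))
  · intro h
    rw [Measure.restrict_eq_zero.mpr h, integral_zero_measure]

/-- pointwise exchange inequality -/
lemma W_exchange {ν : Measure ℝ} {c y₁ y₂ u v : ℝ} (hy : y₁ ≤ y₂) (hvu : v ≤ u) :
    W ν c y₁ u * W ν c y₂ v ≤ W ν c y₂ u * W ν c y₁ v := by
  unfold W
  rw [← Real.exp_add, ← Real.exp_add]
  exact Real.exp_le_exp.mpr (by nlinarith)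

/-- the cross-product comparison (non-strict) -/
lemma cross_le {ν μ : Measure ℝ} [SigmaFinite ν] [IsFiniteMeasure μ] {P Q : Set ℝ}
    (hP : MeasurableSet P) (hQ : MeasurableSet Q) {c y₁ y₂ : ℝ} (hy : y₁ ≤ y₂)
    (hPQ : ∀ p ∈ P, ∀ r ∈ Q, r ≤ p)
    (h1 : Integrable (W ν c y₁) μ) (h2 : Integrable (W ν c y₂) μ) :
    (∫ u in Q, W ν c y₂ u ∂μ) * ∫ u in P, W ν c y₁ u ∂μ ≤
      (∫ u in P, W ν c y₂ u ∂μ) * ∫ u in Q, W ν c y₁ u ∂μ := by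
  have hF : ∀ (ya yb : ℝ), (∫ u in P, W ν c ya u ∂μ) * ∫ u in Q, W ν c yb u ∂μ
      = ∫ p : ℝ × ℝ, (P.indicator (W ν c ya) p.1) * (Q.indicator (W ν c yb) p.2) ∂(μ.prod μ) := by
    intro ya yb
    rw [← integral_indicator hP, ← integral_indicator hQ]
    exact (integral_prod_mul (L := ℝ) _ _).symm
  rw [mul_comm, hF y₁ y₂, hF y₂ y₁]
  refine integral_mono ?_ ?_ ?_
  · exact ((h1.indicator hP).mul_prod (h2.indicator hQ))
  · exact ((h2.indicator hP).mul_prod (h1.indicator hQ))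
  · rintro ⟨u, v⟩
    by_cases hu : u ∈ P
    · by_cases hv : v ∈ Q
      · simp only [Set.indicator_of_mem hu, Set.indicator_of_mem hv]
        exact W_exchange hy (hPQ u hu v hv)
      · simp [Set.indicator_of_notMem hv]
    · simp [Set.indicator_of_notMem hu]

/-- the cross-product comparison (strict) -/
lemma cross_lt {ν μ : Measure ℝ} [SigmaFinite ν] [IsFiniteMeasure μ] {P Q : Set ℝ}
    (hP : MeasurableSet P) (hQ : MeasurableSet Q) {c y₁ y₂ : ℝ} (hy : y₁ < y₂)
    (hPQ : ∀ p ∈ P, ∀ r ∈ Q, r < p) (hμP : μ P ≠ 0) (hμQ : μ Q ≠ 0)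
    (h1 : Integrable (W ν c y₁) μ) (h2 : Integrable (W ν c y₂) μ) :
    (∫ u in Q, W ν c y₂ u ∂μ) * ∫ u in P, W ν c y₁ u ∂μ <
      (∫ u in P, W ν c y₂ u ∂μ) * ∫ u in Q, W ν c y₁ u ∂μ := by
  have hF : ∀ (ya yb : ℝ), (∫ u in P, W ν c ya u ∂μ) * ∫ u in Q, W ν c yb u ∂μ
      = ∫ p : ℝ × ℝ, (P.indicator (W ν c ya) p.1) * (Q.indicator (W ν c yb) p.2) ∂(μ.prod μ) := by
    intro ya yb
    rw [← integral_indicator hP, ← integral_indicator hQ]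
    exact (integral_prod_mul (L := ℝ) _ _).symm
  rw [mul_comm, hF y₁ y₂, hF y₂ y₁, ← sub_pos]
  set F : ℝ × ℝ → ℝ := fun p => P.indicator (W ν c y₂) p.1 * Q.indicator (W ν c y₁) p.2 with hFdef
  set G : ℝ × ℝ → ℝ := fun p => P.indicator (W ν c y₁) p.1 * Q.indicator (W ν c y₂) p.2 with hGdef
  have hiF : Integrable F (μ.prod μ) := ((h2.indicator hP).mul_prod (h1.indicator hQ))
  have hiG : Integrable G (μ.prod μ) := ((h1.indicator hP).mul_prod (h2.indicator hQ))
  rw [← integral_sub hiF hiG]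
  have hnn : 0 ≤ fun p => F p - G p := by
    intro p
    simp only [Pi.zero_apply, sub_nonneg, hFdef, hGdef]
    by_cases hu : p.1 ∈ P
    · by_cases hv : p.2 ∈ Q
      · simp only [Set.indicator_of_mem hu, Set.indicator_of_mem hv]
        exact W_exchange hy.le (hPQ p.1 hu p.2 hv).le
      · simp [Set.indicator_of_notMem hv]
    · simp [Set.indicator_of_notMem hu]
  rw [integral_pos_iff_support_of_nonneg hnn (hiF.sub hiG)]
  have hsub : P ×ˢ Q ⊆ Function.support fun p => F p - G p := by
    rintro ⟨u, v⟩ ⟨hu, hv⟩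
    simp only [Function.mem_support, hFdef, hGdef]
    simp only [Set.indicator_of_mem hu, Set.indicator_of_mem hv]
    have h := W_exchange (ν := ν) (c := c) hy.le (hPQ u hu v hv).le
    have hstrict : W ν c y₁ u * W ν c y₂ v < W ν c y₂ u * W ν c y₁ v := by
      unfold W
      rw [← Real.exp_add, ← Real.exp_add]
      apply Real.exp_lt_exp.mpr
      have h1 := hPQ u hu v hv
      nlinarith
    intro hcon
    rw [sub_eq_zero] at hcon
    exact absurd hcon (ne_of_gt hstrict)
  calc (0:ENNReal) < (μ.prod μ) (P ×ˢ Q) := by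
        rw [Measure.prod_prod]; exact ENNReal.mul_pos hμP hμQ
    _ ≤ _ := measure_mono hsub




/-- the density `ρ(t) = (δ - B'(t)) e^{tδ - B(t)}`, derivative of `r = W ν 1 δ`. -/
noncomputable def rho (ν : Measure ℝ) (δ t : ℝ) : ℝ := (δ - deriv (cgf ν) t) * W ν 1 δ t

lemma measurable_rho (ν : Measure ℝ) [SigmaFinite ν] (δ : ℝ) : Measurable (rho ν δ) :=
  ((measurable_const.sub (measurable_deriv (cgf ν))).mul (measurable_W 1 δ))

lemma hasDerivAt_r {ν : Measure ℝ} [SigmaFinite ν] {δ t : ℝ} (ht : t ∈ interior (expDom ν)) :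
    HasDerivAt (W ν 1 δ) (rho ν δ t) t := by
  have h1 : HasDerivAt (fun s => s * δ - 1 * cgf ν s) (δ - 1 * deriv (cgf ν) t) t :=
    ((hasDerivAt_id t).mul_const δ |>.congr_deriv (one_mul δ)).sub
      ((hasDerivAt_cgf' ht).const_mul 1)
  have h2 := h1.exp
  have : Real.exp (t * δ - 1 * cgf ν t) * (δ - 1 * deriv (cgf ν) t) = rho ν δ t := by
    rw [rho, W]; ring
  rw [this] at h2
  exact h2

lemma continuousOn_r {ν : Measure ℝ} [SigmaFinite ν] {δ : ℝ} :
    ContinuousOn (W ν 1 δ) (interior (expDom ν)) := fun t ht =>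
  (hasDerivAt_r (δ := δ) ht).continuousAt.continuousWithinAt

lemma rho_intOn {ν : Measure ℝ} [SigmaFinite ν] {δ v u : ℝ} (hvu : v ≤ u)
    (hIcc : Icc v u ⊆ interior (expDom ν)) :
    IntegrableOn (rho ν δ) (Ioc v u) volume := by
  obtain ⟨Cr, hCr⟩ := (isCompact_Icc (a := v) (b := u)).exists_bound_of_continuousOn
    (continuousOn_r.mono hIcc)
  have hv : v ∈ interior (expDom ν) := hIcc (Set.left_mem_Icc.mpr hvu)
  have hu : u ∈ interior (expDom ν) := hIcc (Set.right_mem_Icc.mpr hvu)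
  set C : ℝ := (|δ| + |deriv (cgf ν) v| + |deriv (cgf ν) u|) * |Cr| with hC
  refine Integrable.mono' (g := fun _ => C)
    (integrableOn_const measure_Ioc_lt_top.ne) ?_ ?_
  · exact (measurable_rho ν δ).aestronglyMeasurable
  · rw [ae_restrict_iff' measurableSet_Ioc]
    refine Filter.Eventually.of_forall fun t ht => ?_
    have htIcc : t ∈ Icc v u := ⟨ht.1.le, ht.2⟩
    have htD : t ∈ interior (expDom ν) := hIcc htIcc
    have hβ1 := deriv_cgf_mono hv htD htIcc.1
    have hβ2 := deriv_cgf_mono htD hu htIcc.2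
    have hr := hCr t htIcc
    rw [Real.norm_eq_abs] at hr ⊢
    rw [rho, abs_mul]
    have h1 : |δ - deriv (cgf ν) t| ≤ |δ| + |deriv (cgf ν) v| + |deriv (cgf ν) u| := by
      rcases abs_cases (deriv (cgf ν) v) with ⟨h, _⟩ | ⟨h, _⟩ <;>
        rcases abs_cases (deriv (cgf ν) u) with ⟨h', _⟩ | ⟨h', _⟩ <;>
        rcases abs_cases (δ - deriv (cgf ν) t) with ⟨h'', _⟩ | ⟨h'', _⟩ <;>
        rcases abs_cases δ with ⟨h''', _⟩ | ⟨h''', _⟩ <;> linarith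
    calc |δ - deriv (cgf ν) t| * |W ν 1 δ t|
        ≤ (|δ| + |deriv (cgf ν) v| + |deriv (cgf ν) u|) * |Cr| := by
          apply mul_le_mul h1 (le_trans hr (le_abs_self Cr)) (abs_nonneg _)
          positivity
      _ = C := hC.symm

lemma ftc {ν : Measure ℝ} [SigmaFinite ν] {δ v u : ℝ} (hvu : v ≤ u)
    (hIcc : Icc v u ⊆ interior (expDom ν)) :
    ∫ t in Ioc v u, rho ν δ t ∂volume = W ν 1 δ u - W ν 1 δ v := by
  rw [← intervalIntegral.integral_of_le hvu]
  refine intervalIntegral.integral_eq_sub_of_hasDerivAt (fun t ht => ?_) ?_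
  · exact hasDerivAt_r (hIcc (by rwa [Set.uIcc_of_le hvu] at ht))
  · rw [intervalIntegrable_iff, Set.uIoc_of_le hvu]
    exact rho_intOn hvu hIcc




lemma trichotomy (ν : Measure ℝ) [SigmaFinite ν] (δ : ℝ) :
    (∀ t ∈ interior (expDom ν), deriv (cgf ν) t ≤ δ) ∨
    (∀ t ∈ interior (expDom ν), δ < deriv (cgf ν) t) ∨
    (∃ τ : ℝ, (∀ t ∈ interior (expDom ν), t < τ → deriv (cgf ν) t ≤ δ) ∧
              (∀ t ∈ interior (expDom ν), τ < t → δ < deriv (cgf ν) t)) := by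
  set D := interior (expDom ν)
  set β := deriv (cgf ν)
  by_cases h1 : ∃ t ∈ D, δ < β t
  · by_cases h2 : ∃ t ∈ D, β t ≤ δ
    · obtain ⟨t₁, ht₁D, ht₁⟩ := h1
      obtain ⟨t₀, ht₀D, ht₀⟩ := h2
      set J := {t : ℝ | t ∈ D ∧ δ < β t} with hJ
      have hJne : J.Nonempty := ⟨t₁, ht₁D, ht₁⟩
      have hlbd : ∀ j ∈ J, t₀ ≤ j := by
        rintro j ⟨hjD, hj⟩
        by_contra hc
        push_neg at hc
        exact absurd (deriv_cgf_mono hjD ht₀D hc.le) (by linarith)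
      have hbdd : BddBelow J := ⟨t₀, hlbd⟩
      refine Or.inr (Or.inr ⟨sInf J, fun t htD hlt => ?_, fun t htD hgt => ?_⟩)
      · by_contra hc
        push_neg at hc
        have : t ∈ J := ⟨htD, hc⟩
        exact absurd (csInf_le hbdd this) (by linarith)
      · obtain ⟨j, hjJ, hjt⟩ := exists_lt_of_csInf_lt hJne hgt
        exact lt_of_lt_of_le hjJ.2 (deriv_cgf_mono hjJ.1 htD hjt.le)
    · push_neg at h2
      exact Or.inr (Or.inl fun t ht => h2 t ht)
  · push_neg at h1
    exact Or.inl fun t ht => h1 t ht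

/-- integral of `|ρ|` on an interval where `ρ ≥ 0` (to the left of the threshold). -/
lemma abs_rho_int_pos {ν : Measure ℝ} [SigmaFinite ν] {δ τ p s : ℝ}
    (hlt : ∀ t ∈ interior (expDom ν), t < τ → deriv (cgf ν) t ≤ δ)
    (hps : p ≤ s) (hsτ : s ≤ τ) (hIcc : Icc p s ⊆ interior (expDom ν)) :
    ∫ t in Ioc p s, |rho ν δ t| ∂volume = W ν 1 δ s - W ν 1 δ p := by
  rw [← ftc hps hIcc]
  refine integral_congr_ae ?_
  have h2 : ∀ᵐ (t : ℝ) ∂volume, t ≠ τ := by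
    rw [ae_iff]
    have : {t : ℝ | ¬t ≠ τ} = {τ} := by ext t; simp
    rw [this]
    exact Real.volume_singleton
  filter_upwards [ae_restrict_of_ae h2, ae_restrict_mem measurableSet_Ioc] with t htne htmem
  have htD : t ∈ interior (expDom ν) := hIcc ⟨htmem.1.le, htmem.2⟩
  have htτ : t < τ := lt_of_le_of_ne (le_trans htmem.2 hsτ) htne
  have := hlt t htD htτ
  rw [rho, abs_of_nonneg (mul_nonneg (by linarith) W_pos.le)]

/-- integral of `|ρ|` on an interval where `ρ ≤ 0` (to the right of the threshold). -/
lemma abs_rho_int_neg {ν : Measure ℝ} [SigmaFinite ν] {δ τ p s : ℝ}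
    (hgt : ∀ t ∈ interior (expDom ν), τ < t → δ < deriv (cgf ν) t)
    (hps : p ≤ s) (hτp : τ ≤ p) (hIcc : Icc p s ⊆ interior (expDom ν)) :
    ∫ t in Ioc p s, |rho ν δ t| ∂volume = W ν 1 δ p - W ν 1 δ s := by
  have key : ∫ t in Ioc p s, |rho ν δ t| ∂volume = ∫ t in Ioc p s, -rho ν δ t ∂volume := by
    refine integral_congr_ae ?_
    filter_upwards [ae_restrict_mem measurableSet_Ioc] with t htmem
    have htD : t ∈ interior (expDom ν) := hIcc ⟨htmem.1.le, htmem.2⟩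
    have htτ : τ < t := lt_of_le_of_lt hτp htmem.1
    have := hgt t htD htτ
    rw [rho, abs_of_nonpos (mul_nonpos_of_nonpos_of_nonneg (by linarith) W_pos.le)]
  rw [key, integral_neg, ftc hps hIcc]
  ring

lemma tv_bound (ν : Measure ℝ) [SigmaFinite ν] (δ : ℝ) :
    ∃ K : ℝ, 0 ≤ K ∧ ∀ v u : ℝ, v ≤ u → Icc v u ⊆ interior (expDom ν) →
      ∫ t in Ioc v u, |rho ν δ t| ∂volume ≤ 2 * (W ν 1 δ u + W ν 1 δ v + K) := by
  rcases trichotomy ν δ with hA | hB | ⟨τ, hlt, hgt⟩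
  · refine ⟨0, le_refl 0, fun v u hvu hIcc => ?_⟩
    have h := abs_rho_int_pos (τ := u + 1)
      (fun t ht _ => hA t ht) hvu (by linarith) hIcc
    rw [h]
    have := W_pos (ν := ν) (c := 1) (y := δ) (u := u)
    have := W_pos (ν := ν) (c := 1) (y := δ) (u := v)
    linarith
  · refine ⟨0, le_refl 0, fun v u hvu hIcc => ?_⟩
    have h := abs_rho_int_neg (τ := v - 1)
      (fun t ht _ => hB t ht) hvu (by linarith) hIcc
    rw [h]
    have := W_pos (ν := ν) (c := 1) (y := δ) (u := u)
    have := W_pos (ν := ν) (c := 1) (y := δ) (u := v)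
    linarith
  · refine ⟨W ν 1 δ τ, W_pos.le, fun v u hvu hIcc => ?_⟩
    have hru : 0 < W ν 1 δ u := W_pos
    have hrv : 0 < W ν 1 δ v := W_pos
    have hrτ : 0 < W ν 1 δ τ := W_pos
    set m := max v (min u τ) with hm
    have hvm : v ≤ m := le_max_left _ _
    have hmu : m ≤ u := max_le hvu (min_le_left _ _)
    have hIcc1 : Icc v m ⊆ interior (expDom ν) := fun x hx => hIcc ⟨hx.1, le_trans hx.2 hmu⟩
    have hIcc2 : Icc m u ⊆ interior (expDom ν) := fun x hx => hIcc ⟨le_trans hvm hx.1, hx.2⟩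
    have hsplit : Ioc v u = Ioc v m ∪ Ioc m u := (Set.Ioc_union_Ioc_eq_Ioc hvm hmu).symm
    have hdisj : Disjoint (Ioc v m) (Ioc m u) := by
      refine Set.disjoint_left.mpr fun x hx1 hx2 => absurd hx2.1 (not_lt.mpr hx1.2)
    have habs_int1 : IntegrableOn (fun t => |rho ν δ t|) (Ioc v m) volume :=
      (rho_intOn hvm hIcc1).abs
    have habs_int2 : IntegrableOn (fun t => |rho ν δ t|) (Ioc m u) volume :=
      (rho_intOn hmu hIcc2).abs
    rw [hsplit, setIntegral_union hdisj measurableSet_Ioc habs_int1 habs_int2]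
    rcases le_total τ v with hτv | hvτ
    · -- τ ≤ v : the whole interval is on the decreasing side; m = v
      have hmv : m = v := by
        rw [hm]
        exact max_eq_left (le_trans (min_le_right _ _) hτv)
      rw [hmv]
      have h0 : ∫ t in Ioc v v, |rho ν δ t| ∂volume = 0 := by simp
      have h2 := abs_rho_int_neg hgt hvu hτv hIcc
      rw [h0, h2]
      linarith
    · -- v ≤ τ
      have hmτ : m ≤ τ := max_le hvτ (min_le_right _ _)
      have h1 := abs_rho_int_pos hlt hvm hmτ hIcc1
      rcases le_total u τ with huτ | hτu
      · -- u ≤ τ : all on increasing side; m = u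
        have hmu' : m = u := by
          rw [hm, min_eq_left huτ, max_eq_right hvu]
        rw [hmu'] at h1 ⊢
        have h0 : ∫ t in Ioc u u, |rho ν δ t| ∂volume = 0 := by simp
        rw [h1, h0]
        linarith
      · -- v ≤ τ ≤ u : m = τ
        have hmτ' : m = τ := by rw [hm, min_eq_right hτu, max_eq_right hvτ]
        rw [hmτ'] at h1 ⊢
        have h2 := abs_rho_int_neg hgt hτu (le_refl τ) (hmτ' ▸ hIcc2)
        rw [h1, h2]
        linarith
  



noncomputable def af (ν μ : Measure ℝ) (θ₀ c y t : ℝ) : ℝ :=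
  ∫ u in Ioi θ₀ ∩ Ici t, W ν c y u ∂μ

noncomputable def bf (ν μ : Measure ℝ) (θ₀ c y t : ℝ) : ℝ :=
  ∫ v in Iic θ₀ ∩ Iio t, W ν c y v ∂μ

lemma W_split {ν : Measure ℝ} {c y δ u : ℝ} :
    W ν (c+1) (y+δ) u = W ν 1 δ u * W ν c y u := by
  unfold W
  rw [← Real.exp_add]
  ring_nf

lemma ae_supp_pair (μ : Measure ℝ) [IsProbabilityMeasure μ] :
    ∀ᵐ p : ℝ × ℝ ∂(μ.prod μ), p.1 ∈ msupport μ ∧ p.2 ∈ msupport μ := by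
  rw [ae_iff]
  refine measure_mono_null (fun p hp => ?_)
    (?_ : (μ.prod μ) ((msupport μ)ᶜ ×ˢ (univ : Set ℝ) ∪ (univ : Set ℝ) ×ˢ (msupport μ)ᶜ) = 0)
  · simp only [Set.mem_setOf_eq, not_and_or] at hp
    rcases hp with h | h
    · exact Set.mem_union_left _ ⟨h, trivial⟩
    · exact Set.mem_union_right _ ⟨trivial, h⟩
  · refine measure_union_null ?_ ?_ <;> rw [Measure.prod_prod]
    · rw [msupport_compl_null]; simp
    · rw [msupport_compl_null]; simp


lemma ind_shuffle {θ₀ t : ℝ} (G R : ℝ → ℝ) (p : ℝ × ℝ) :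
    (Ioi θ₀).indicator G p.1 * (Iic θ₀).indicator G p.2 * (Ioc p.2 p.1).indicator R t
      = ((Ioi θ₀ ∩ Ici t).indicator G p.1) *
          (((Iic θ₀ ∩ Iio t).indicator G p.2) * R t) := by
  obtain ⟨u, v⟩ := p
  by_cases h1 : θ₀ < u <;> by_cases h2 : v ≤ θ₀ <;> by_cases h3 : t ≤ u <;>
    by_cases h4 : v < t <;>
    simp [Set.indicator_apply, Set.mem_inter_iff, Set.mem_Ioc, Set.mem_Ici, Set.mem_Iio,
      Set.mem_Ioi, Set.mem_Iic, h1, h2, h3, h4, mul_assoc]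

/-- The main Fubini representation. -/
lemma key_rep (ν μ : Measure ℝ) [SigmaFinite ν] [IsProbabilityMeasure μ]
    (θ₀ : ℝ) (hsupp : msupport μ ⊆ interior (expDom ν)) (c y δ : ℝ)
    (hWy : Integrable (W ν c y) μ) (hWyδ : Integrable (W ν (c+1) (y+δ)) μ) :
    Integrable (fun t => rho ν δ t * (af ν μ θ₀ c y t * bf ν μ θ₀ c y t)) volume ∧
    (∫ u in Ioi θ₀, W ν 1 δ u * W ν c y u ∂μ) * (∫ v in Iic θ₀, W ν c y v ∂μ)
      - (∫ u in Ioi θ₀, W ν c y u ∂μ) * (∫ v in Iic θ₀, W ν 1 δ v * W ν c y v ∂μ)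
      = ∫ t, rho ν δ t * (af ν μ θ₀ c y t * bf ν μ θ₀ c y t) ∂volume := by
  set S := Ioi θ₀ with hSdef
  set T := Iic θ₀ with hTdef
  have hS : MeasurableSet S := measurableSet_Ioi
  have hT : MeasurableSet T := measurableSet_Iic
  have hrG : (fun u => (W ν 1 δ) u * (W ν c y) u) = W ν (c+1) (y+δ) := by
    funext u; exact W_split.symm
  have hrG_int : Integrable (fun u => (W ν 1 δ) u * (W ν c y) u) μ := by rw [hrG]; exact hWyδ
  -- the三重 integrand
  set F : (ℝ × ℝ) → ℝ → ℝ := fun p t =>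
    S.indicator (W ν c y) p.1 * T.indicator (W ν c y) p.2 * (Ioc p.2 p.1).indicator (rho ν δ) t with hFdef
  obtain ⟨K, hK0, hKbd⟩ := tv_bound ν δ
  -- measurability of uncurried F
  have hFm : Measurable (Function.uncurry F) := by
    have h3eq : (Function.uncurry F) = fun z : (ℝ × ℝ) × ℝ =>
        S.indicator (W ν c y) z.1.1 * T.indicator (W ν c y) z.1.2 *
          ({w : (ℝ × ℝ) × ℝ | w.1.2 < w.2 ∧ w.2 ≤ w.1.1}.indicator
            (fun w => rho ν δ w.2) z) := by
      funext z
      simp only [Function.uncurry, hFdef]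
      by_cases hz : z.1.2 < z.2 ∧ z.2 ≤ z.1.1 <;>
        simp [Set.indicator_apply, Set.mem_Ioc, Set.mem_setOf_eq, hz]
    rw [h3eq]
    have hWm : Measurable (W ν c y) := measurable_W c y
    refine Measurable.mul (Measurable.mul ?_ ?_) ?_
    · exact (hWm.indicator hS).comp (measurable_fst.comp measurable_fst)
    · exact (hWm.indicator hT).comp (measurable_snd.comp measurable_fst)
    · refine Measurable.indicator ((measurable_rho ν δ).comp measurable_snd) ?_
      exact MeasurableSet.inter
        (measurableSet_lt (measurable_fst.snd) measurable_snd)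
        (measurableSet_le measurable_snd (measurable_fst.fst))
  -- good pairs
  have hgood : ∀ p : ℝ × ℝ, p.1 ∈ msupport μ → p.2 ∈ msupport μ → p.1 ∈ S → p.2 ∈ T →
      (p.2 ≤ p.1 ∧ Icc p.2 p.1 ⊆ interior (expDom ν)) := by
    rintro ⟨u, v⟩ hu hv huS hvT
    have hvu : v ≤ u := le_trans hvT (le_of_lt huS)
    refine ⟨hvu, ?_⟩
    exact ((convex_expDom ν).interior.ordConnected).out (hsupp hv) (hsupp hu)
  -- sections: value of the inner integral
  have hsect : ∀ p : ℝ × ℝ, p.2 ≤ p.1 → Icc p.2 p.1 ⊆ interior (expDom ν) →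
      ∫ t, F p t ∂volume = S.indicator (W ν c y) p.1 * T.indicator (W ν c y) p.2 * ((W ν 1 δ) p.1 - (W ν 1 δ) p.2) := by
    rintro ⟨u, v⟩ hvu hIcc
    have : (fun t => F (u, v) t) = fun t =>
        S.indicator (W ν c y) u * T.indicator (W ν c y) v * (Ioc v u).indicator (rho ν δ) t := rfl
    rw [this, integral_const_mul, integral_indicator measurableSet_Ioc, ftc hvu hIcc]
  have hsect0 : ∀ p : ℝ × ℝ, p.1 ∉ S ∨ p.2 ∉ T → F p = 0 := by
    rintro ⟨u, v⟩ h
    funext t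
    rcases h with h | h <;>
      simp [hFdef, Set.indicator_of_notMem h]
  -- integrability of sections
  have hsect_int : ∀ᵐ p ∂(μ.prod μ), Integrable (F p) volume := by
    filter_upwards [ae_supp_pair μ] with p hp
    by_cases hPS : p.1 ∈ S
    · by_cases hPT : p.2 ∈ T
      · obtain ⟨hvu, hIcc⟩ := hgood p hp.1 hp.2 hPS hPT
        have : F p = fun t => S.indicator (W ν c y) p.1 * T.indicator (W ν c y) p.2 *
            (Ioc p.2 p.1).indicator (rho ν δ) t := rfl
        rw [this]
        exact (((rho_intOn hvu hIcc).integrable_indicator measurableSet_Ioc).const_mul _)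
      · rw [hsect0 p (Or.inr hPT)]; exact integrable_zero _ _ _
    · rw [hsect0 p (Or.inl hPS)]; exact integrable_zero _ _ _
  -- the norm-integral bound
  set Bnd : ℝ × ℝ → ℝ := fun p =>
    2 * (S.indicator (fun u => (W ν 1 δ) u * (W ν c y) u) p.1 * T.indicator (W ν c y) p.2
       + S.indicator (W ν c y) p.1 * T.indicator (fun v => (W ν 1 δ) v * (W ν c y) v) p.2
       + K * (S.indicator (W ν c y) p.1 * T.indicator (W ν c y) p.2)) with hBnddef
  have hBnd_int : Integrable Bnd (μ.prod μ) := by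
    refine (Integrable.add (Integrable.add ?_ ?_) ?_).const_mul 2
    · exact (hrG_int.indicator hS).mul_prod (hWy.indicator hT)
    · exact (hWy.indicator hS).mul_prod (hrG_int.indicator hT)
    · exact ((hWy.indicator hS).mul_prod (hWy.indicator hT)).const_mul K
  have hnorm_bound : ∀ᵐ p ∂(μ.prod μ), (∫ t, ‖F p t‖ ∂volume) ≤ Bnd p := by
    filter_upwards [ae_supp_pair μ] with p hp
    have hBnd_nonneg : 0 ≤ Bnd p := by
      rw [hBnddef]
      have h1 : 0 ≤ S.indicator (fun u => (W ν 1 δ) u * (W ν c y) u) p.1 :=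
        Set.indicator_nonneg (fun x _ => mul_nonneg W_pos.le W_pos.le) _
      have h2 : 0 ≤ T.indicator (W ν c y) p.2 := Set.indicator_nonneg (fun x _ => W_pos.le) _
      have h3 : 0 ≤ S.indicator (W ν c y) p.1 := Set.indicator_nonneg (fun x _ => W_pos.le) _
      have h4 : 0 ≤ T.indicator (fun v => (W ν 1 δ) v * (W ν c y) v) p.2 :=
        Set.indicator_nonneg (fun x _ => mul_nonneg W_pos.le W_pos.le) _
      positivity
    by_cases hPS : p.1 ∈ S
    · by_cases hPT : p.2 ∈ T
      · obtain ⟨hvu, hIcc⟩ := hgood p hp.1 hp.2 hPS hPT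
        have heq : ∀ t, ‖F p t‖ = S.indicator (W ν c y) p.1 * T.indicator (W ν c y) p.2 *
            (Ioc p.2 p.1).indicator (fun s => |rho ν δ s|) t := by
          intro t
          rw [Real.norm_eq_abs, hFdef]
          simp only []
          rw [abs_mul, abs_mul]
          rw [abs_of_nonneg (Set.indicator_nonneg (fun x _ => W_pos.le) _),
            abs_of_nonneg (Set.indicator_nonneg (fun x _ => W_pos.le) _)]
          congr 1
          by_cases ht : t ∈ Ioc p.2 p.1
          · rw [Set.indicator_of_mem ht, Set.indicator_of_mem ht]
          · rw [Set.indicator_of_notMem ht, Set.indicator_of_notMem ht, abs_zero]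
        have heqf : (fun t => ‖F p t‖) = fun t => S.indicator (W ν c y) p.1 * T.indicator (W ν c y) p.2 *
            (Ioc p.2 p.1).indicator (fun s => |rho ν δ s|) t := funext heq
        have hI := hKbd p.2 p.1 hvu hIcc
        have hGG : (0:ℝ) ≤ S.indicator (W ν c y) p.1 * T.indicator (W ν c y) p.2 :=
          mul_nonneg (Set.indicator_nonneg (fun x _ => W_pos.le) _)
            (Set.indicator_nonneg (fun x _ => W_pos.le) _)
        calc (∫ t, ‖F p t‖ ∂volume)
            = S.indicator (W ν c y) p.1 * T.indicator (W ν c y) p.2 *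
                ∫ t in Ioc p.2 p.1, |rho ν δ t| ∂volume := by
              rw [heqf, integral_const_mul, integral_indicator measurableSet_Ioc]
          _ ≤ S.indicator (W ν c y) p.1 * T.indicator (W ν c y) p.2 * (2 * ((W ν 1 δ) p.1 + (W ν 1 δ) p.2 + K)) :=
              mul_le_mul_of_nonneg_left hI hGG
          _ ≤ Bnd p := by
              rw [hBnddef]
              simp only [Set.indicator_of_mem hPS, Set.indicator_of_mem hPT]
              have := W_pos (ν := ν) (c := c) (y := y) (u := p.1)
              have := W_pos (ν := ν) (c := c) (y := y) (u := p.2)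
              nlinarith [W_pos (ν := ν) (c := 1) (y := δ) (u := p.1),
                W_pos (ν := ν) (c := 1) (y := δ) (u := p.2)]
      · rw [hsect0 p (Or.inr hPT)]
        simpa using hBnd_nonneg
    · rw [hsect0 p (Or.inl hPS)]
      simpa using hBnd_nonneg
  -- integrability of the uncurried function
  have hFint : Integrable (Function.uncurry F) ((μ.prod μ).prod volume) := by
    rw [integrable_prod_iff hFm.aestronglyMeasurable]
    refine ⟨hsect_int, ?_⟩
    refine hBnd_int.mono' ?_ ?_
    · exact (hFm.norm.aestronglyMeasurable).integral_prod_right'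
    · filter_upwards [hnorm_bound] with p hp
      rw [Real.norm_eq_abs, abs_of_nonneg (integral_nonneg fun t => norm_nonneg _)]
      exact hp
  -- Fubini swap
  have hswap := integral_integral_swap (f := F) hFint
  -- evaluation of the (u,v)-side
  have hLHS : ∫ p : ℝ × ℝ, (∫ t, F p t ∂volume) ∂(μ.prod μ)
      = (∫ u in S, (W ν 1 δ) u * (W ν c y) u ∂μ) * (∫ v in T, (W ν c y) v ∂μ)
        - (∫ u in S, (W ν c y) u ∂μ) * (∫ v in T, (W ν 1 δ) v * (W ν c y) v ∂μ) := by
    have e1 : ∫ p : ℝ × ℝ, (∫ t, F p t ∂volume) ∂(μ.prod μ) = ∫ p : ℝ × ℝ,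
        (S.indicator (fun u => (W ν 1 δ) u * (W ν c y) u) p.1 * T.indicator (W ν c y) p.2
          - S.indicator (W ν c y) p.1 * T.indicator (fun v => (W ν 1 δ) v * (W ν c y) v) p.2) ∂(μ.prod μ) := by
      refine integral_congr_ae ?_
      filter_upwards [ae_supp_pair μ] with p hp
      by_cases hPS : p.1 ∈ S
      · by_cases hPT : p.2 ∈ T
        · obtain ⟨hvu, hIcc⟩ := hgood p hp.1 hp.2 hPS hPT
          rw [hsect p hvu hIcc]
          simp only [Set.indicator_of_mem hPS, Set.indicator_of_mem hPT]
          ring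
        · rw [hsect0 p (Or.inr hPT)]
          simp [Set.indicator_of_notMem hPT]
      · rw [hsect0 p (Or.inl hPS)]
        simp [Set.indicator_of_notMem hPS]
    have hi1 : Integrable (fun p : ℝ × ℝ =>
        S.indicator (fun u => (W ν 1 δ) u * (W ν c y) u) p.1 * T.indicator (W ν c y) p.2) (μ.prod μ) :=
      (hrG_int.indicator hS).mul_prod (hWy.indicator hT)
    have hi2 : Integrable (fun p : ℝ × ℝ =>
        S.indicator (W ν c y) p.1 * T.indicator (fun v => (W ν 1 δ) v * (W ν c y) v) p.2) (μ.prod μ) :=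
      (hWy.indicator hS).mul_prod (hrG_int.indicator hT)
    rw [e1, integral_sub hi1 hi2, integral_prod_mul (L := ℝ), integral_prod_mul (L := ℝ),
      integral_indicator hS, integral_indicator hT, integral_indicator hS, integral_indicator hT]
  -- evaluation of the t-side
  have hinner : ∀ t : ℝ, (∫ p : ℝ × ℝ, F p t ∂(μ.prod μ))
      = rho ν δ t * (af ν μ θ₀ c y t * bf ν μ θ₀ c y t) := by
    intro t
    have e : (fun p : ℝ × ℝ => F p t) = fun p : ℝ × ℝ =>
        ((Ioi θ₀ ∩ Ici t).indicator (W ν c y) p.1) *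
          (((Iic θ₀ ∩ Iio t).indicator (W ν c y) p.2) * rho ν δ t) :=
      funext fun p => ind_shuffle (W ν c y) (rho ν δ) p
    have e2 : ∫ p : ℝ × ℝ, ((Ioi θ₀ ∩ Ici t).indicator (W ν c y) p.1) *
          (((Iic θ₀ ∩ Iio t).indicator (W ν c y) p.2) * rho ν δ t) ∂(μ.prod μ)
        = (∫ u, (Ioi θ₀ ∩ Ici t).indicator (W ν c y) u ∂μ) *
            ∫ v, ((Iic θ₀ ∩ Iio t).indicator (W ν c y) v * rho ν δ t) ∂μ :=
      integral_prod_mul (f := (Ioi θ₀ ∩ Ici t).indicator (W ν c y))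
        (g := fun v => ((Iic θ₀ ∩ Iio t).indicator (W ν c y) v * rho ν δ t))
    rw [e, e2, integral_mul_const,
      integral_indicator (measurableSet_Ioi.inter measurableSet_Ici),
      integral_indicator (measurableSet_Iic.inter measurableSet_Iio)]
    simp only [af, bf]
    ring
  -- integrability of ψ
  have hψint : Integrable (fun t => rho ν δ t * (af ν μ θ₀ c y t * bf ν μ θ₀ c y t)) volume := by
    have h := hFint.integral_prod_right
    exact h.congr (Filter.Eventually.of_forall fun t => hinner t)
  refine ⟨hψint, ?_⟩
  rw [← hLHS, hswap]
  exact integral_congr_ae (Filter.Eventually.of_forall fun t => hinner t)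




section crossmono
variable {ν μ : Measure ℝ} [SigmaFinite ν] [IsProbabilityMeasure μ] {θ₀ c y y₁ y₂ t t' : ℝ}

lemma af_nonneg : 0 ≤ af ν μ θ₀ c y t := setIntegral_W_nonneg _
lemma bf_nonneg : 0 ≤ bf ν μ θ₀ c y t := setIntegral_W_nonneg _

lemma af_zero_iff (hW : Integrable (W ν c y) μ) :
    af ν μ θ₀ c y t = 0 ↔ μ (Ioi θ₀ ∩ Ici t) = 0 :=
  setIntegral_W_eq_zero_iff (measurableSet_Ioi.inter measurableSet_Ici) hW

lemma bf_zero_iff (hW : Integrable (W ν c y) μ) :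
    bf ν μ θ₀ c y t = 0 ↔ μ (Iic θ₀ ∩ Iio t) = 0 :=
  setIntegral_W_eq_zero_iff (measurableSet_Iic.inter measurableSet_Iio) hW

lemma af_cross (htt : t ≤ t') (hy : y₁ ≤ y₂)
    (hW1 : Integrable (W ν c y₁) μ) (hW2 : Integrable (W ν c y₂) μ) :
    af ν μ θ₀ c y₂ t * af ν μ θ₀ c y₁ t' ≤ af ν μ θ₀ c y₂ t' * af ν μ θ₀ c y₁ t := by
  have hsplit : ∀ ys : ℝ, Integrable (W ν c ys) μ → af ν μ θ₀ c ys t = af ν μ θ₀ c ys t' +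
      ∫ u in Ioi θ₀ ∩ Ico t t', W ν c ys u ∂μ := by
    intro ys hint
    have hset : Ioi θ₀ ∩ Ici t = (Ioi θ₀ ∩ Ici t') ∪ (Ioi θ₀ ∩ Ico t t') := by
      ext x
      simp only [Set.mem_inter_iff, Set.mem_union, Set.mem_Ioi, Set.mem_Ici, Set.mem_Ico]
      constructor
      · rintro ⟨hθ, hx⟩
        rcases le_or_gt t' x with h2 | h2
        · exact Or.inl ⟨hθ, h2⟩
        · exact Or.inr ⟨hθ, hx, h2⟩
      · rintro (⟨hθ, hx⟩ | ⟨hθ, hx, _⟩)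
        · exact ⟨hθ, le_trans htt hx⟩
        · exact ⟨hθ, hx⟩
    rw [af, af, hset, setIntegral_union
      (Set.disjoint_left.mpr fun x hx1 hx2 => absurd hx2.2.2 (not_lt.mpr hx1.2))
      (measurableSet_Ioi.inter measurableSet_Ico) hint.integrableOn hint.integrableOn]
  have hkey := cross_le (ν := ν) (μ := μ) (c := c)
    (measurableSet_Ioi.inter measurableSet_Ici) (measurableSet_Ioi.inter measurableSet_Ico)
    hy (P := Ioi θ₀ ∩ Ici t') (Q := Ioi θ₀ ∩ Ico t t')
    (fun p hp r hr => le_trans hr.2.2.le hp.2) hW1 hW2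
  rw [hsplit y₁ hW1, hsplit y₂ hW2]
  have h1 := setIntegral_W_nonneg (ν := ν) (μ := μ) (c := c) (y := y₁) (Ioi θ₀ ∩ Ici t')
  have h2 := setIntegral_W_nonneg (ν := ν) (μ := μ) (c := c) (y := y₂) (Ioi θ₀ ∩ Ico t t')
  rw [af, af]
  nlinarith [hkey]

lemma bf_cross (htt : t ≤ t') (hy : y₁ ≤ y₂)
    (hW1 : Integrable (W ν c y₁) μ) (hW2 : Integrable (W ν c y₂) μ) :
    bf ν μ θ₀ c y₂ t * bf ν μ θ₀ c y₁ t' ≤ bf ν μ θ₀ c y₂ t' * bf ν μ θ₀ c y₁ t := by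
  have hsplit : ∀ ys : ℝ, Integrable (W ν c ys) μ → bf ν μ θ₀ c ys t' = bf ν μ θ₀ c ys t +
      ∫ u in Iic θ₀ ∩ Ico t t', W ν c ys u ∂μ := by
    intro ys hint
    have hset : Iic θ₀ ∩ Iio t' = (Iic θ₀ ∩ Iio t) ∪ (Iic θ₀ ∩ Ico t t') := by
      ext x
      simp only [Set.mem_inter_iff, Set.mem_union, Set.mem_Iic, Set.mem_Iio, Set.mem_Ico]
      constructor
      · rintro ⟨hθ, hx⟩
        rcases lt_or_ge x t with h2 | h2
        · exact Or.inl ⟨hθ, h2⟩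
        · exact Or.inr ⟨hθ, h2, hx⟩
      · rintro (⟨hθ, hx⟩ | ⟨hθ, _, hx⟩)
        · exact ⟨hθ, lt_of_lt_of_le hx htt⟩
        · exact ⟨hθ, hx⟩
    rw [bf, bf, hset, setIntegral_union
      (Set.disjoint_left.mpr fun x hx1 hx2 => absurd hx2.2.1 (not_le.mpr hx1.2))
      (measurableSet_Iic.inter measurableSet_Ico) hint.integrableOn hint.integrableOn]
  have hkey := cross_le (ν := ν) (μ := μ) (c := c)
    (measurableSet_Iic.inter measurableSet_Ico) (measurableSet_Iic.inter measurableSet_Iio)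
    hy (P := Iic θ₀ ∩ Ico t t') (Q := Iic θ₀ ∩ Iio t)
    (fun p hp r hr => le_trans hr.2.le hp.2.1) hW1 hW2
  rw [hsplit y₁ hW1, hsplit y₂ hW2]
  have h1 := setIntegral_W_nonneg (ν := ν) (μ := μ) (c := c) (y := y₂) (Iic θ₀ ∩ Iio t)
  have h2 := setIntegral_W_nonneg (ν := ν) (μ := μ) (c := c) (y := y₁) (Iic θ₀ ∩ Ico t t')
  rw [bf, bf]
  nlinarith [hkey]

lemma P_cross (htt : t ≤ t') (hy : y₁ ≤ y₂)
    (hW1 : Integrable (W ν c y₁) μ) (hW2 : Integrable (W ν c y₂) μ) :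
    (af ν μ θ₀ c y₂ t * bf ν μ θ₀ c y₂ t) * (af ν μ θ₀ c y₁ t' * bf ν μ θ₀ c y₁ t') ≤
      (af ν μ θ₀ c y₂ t' * bf ν μ θ₀ c y₂ t') * (af ν μ θ₀ c y₁ t * bf ν μ θ₀ c y₁ t) := by
  have h1 := af_cross (θ₀ := θ₀) htt hy hW1 hW2
  have h2 := bf_cross (θ₀ := θ₀) htt hy hW1 hW2
  nlinarith [mul_le_mul h1 h2 (mul_nonneg bf_nonneg bf_nonneg)
    (mul_nonneg af_nonneg af_nonneg), af_nonneg (ν := ν) (μ := μ) (θ₀ := θ₀) (c := c) (y := y₂) (t := t),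
    bf_nonneg (ν := ν) (μ := μ) (θ₀ := θ₀) (c := c) (y := y₂) (t := t)]

lemma mem_D_of_ab (hsupp : msupport μ ⊆ interior (expDom ν))
    (hW : Integrable (W ν c y) μ)
    (ha : af ν μ θ₀ c y t ≠ 0) (hb : bf ν μ θ₀ c y t ≠ 0) :
    t ∈ interior (expDom ν) := by
  obtain ⟨sp, hsp⟩ := exists_mem_msupport ((af_zero_iff hW).not.mp ha :)
  obtain ⟨sm, hsm⟩ := exists_mem_msupport ((bf_zero_iff hW).not.mp hb :)
  have h1 : t ≤ sp := hsp.1.2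
  have h2 : sm ≤ t := hsm.1.2.le
  exact ((convex_expDom ν).interior.ordConnected).out (hsupp hsm.2) (hsupp hsp.2) ⟨h2, h1⟩

end crossmono




lemma N_nonpos {ν μ : Measure ℝ} [SigmaFinite ν] [IsProbabilityMeasure μ] {θ₀ c δ y₁ y₂ : ℝ}
    (hsupp : msupport μ ⊆ interior (expDom ν)) (hy : y₁ ≤ y₂)
    (hW1 : Integrable (W ν c y₁) μ) (hW2 : Integrable (W ν c y₂) μ)
    (hWδ1 : Integrable (W ν (c+1) (y₁+δ)) μ) (hWδ2 : Integrable (W ν (c+1) (y₂+δ)) μ)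
    (hN1 : (∫ u in Ioi θ₀, W ν 1 δ u * W ν c y₁ u ∂μ) * (∫ v in Iic θ₀, W ν c y₁ v ∂μ)
      - (∫ u in Ioi θ₀, W ν c y₁ u ∂μ) * (∫ v in Iic θ₀, W ν 1 δ v * W ν c y₁ v ∂μ) = 0) :
    (∫ u in Ioi θ₀, W ν 1 δ u * W ν c y₂ u ∂μ) * (∫ v in Iic θ₀, W ν c y₂ v ∂μ)
      - (∫ u in Ioi θ₀, W ν c y₂ u ∂μ) * (∫ v in Iic θ₀, W ν 1 δ v * W ν c y₂ v ∂μ) ≤ 0 := by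
  obtain ⟨hψ1int, hrep1⟩ := key_rep ν μ θ₀ hsupp c y₁ δ hW1 hWδ1
  obtain ⟨hψ2int, hrep2⟩ := key_rep ν μ θ₀ hsupp c y₂ δ hW2 hWδ2
  rw [hrep2]
  rw [hrep1] at hN1
  -- zero-set transfer
  have haz : ∀ t, af ν μ θ₀ c y₁ t = 0 ↔ af ν μ θ₀ c y₂ t = 0 := fun t => by
    rw [af_zero_iff hW1, af_zero_iff hW2]
  have hbz : ∀ t, bf ν μ θ₀ c y₁ t = 0 ↔ bf ν μ θ₀ c y₂ t = 0 := fun t => by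
    rw [bf_zero_iff hW1, bf_zero_iff hW2]
  have htransfer : ∀ t, rho ν δ t * (af ν μ θ₀ c y₁ t * bf ν μ θ₀ c y₁ t) = 0 →
      rho ν δ t * (af ν μ θ₀ c y₂ t * bf ν μ θ₀ c y₂ t) = 0 := by
    intro t h
    rcases mul_eq_zero.mp h with h | h
    · rw [h, zero_mul]
    rcases mul_eq_zero.mp h with h | h
    · rw [(haz t).mp h, zero_mul, mul_zero]
    · rw [(hbz t).mp h, mul_zero, mul_zero]
  -- a convenient "zero from conclusion" helper for the a.e.-zero cases
  have hzero_case : (∀ t, 0 ≤ rho ν δ t * (af ν μ θ₀ c y₁ t * bf ν μ θ₀ c y₁ t)) →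
      (∫ t, rho ν δ t * (af ν μ θ₀ c y₂ t * bf ν μ θ₀ c y₂ t) ∂volume) ≤ 0 := by
    intro h1
    have h2 := (integral_eq_zero_iff_of_nonneg h1 hψ1int).mp hN1
    have h3 : (fun t => rho ν δ t * (af ν μ θ₀ c y₂ t * bf ν μ θ₀ c y₂ t))
        =ᵐ[volume] 0 := by
      filter_upwards [h2] with t ht
      exact htransfer t ht
    rw [integral_eq_zero_of_ae h3]
  rcases trichotomy ν δ with hA | hB | ⟨τ, hlt, hgt⟩
  · -- ρ ≥ 0 on D
    refine hzero_case fun t => ?_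
    rcases eq_or_ne (af ν μ θ₀ c y₁ t) 0 with h | h
    · simp [h]
    rcases eq_or_ne (bf ν μ θ₀ c y₁ t) 0 with h' | h'
    · simp [h']
    · have htD := mem_D_of_ab hsupp hW1 h h'
      have := hA t htD
      exact mul_nonneg (mul_nonneg (by linarith) W_pos.le)
        (mul_nonneg af_nonneg bf_nonneg)
  · -- ρ ≤ 0 on D
    refine integral_nonpos fun t => ?_
    rcases eq_or_ne (af ν μ θ₀ c y₂ t) 0 with h | h
    · simp [h]
    rcases eq_or_ne (bf ν μ θ₀ c y₂ t) 0 with h' | h'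
    · simp [h']
    · have htD := mem_D_of_ab hsupp hW2 h h'
      have := hB t htD
      exact mul_nonpos_of_nonpos_of_nonneg
        (mul_nonpos_of_nonpos_of_nonneg (by linarith) W_pos.le)
        (mul_nonneg af_nonneg bf_nonneg)
  · -- mixed case with threshold τ
    rcases eq_or_ne (af ν μ θ₀ c y₁ τ) 0 with haτ | haτ
    · -- a vanishes at τ, hence for all t ≥ τ
      have haμ : μ (Ioi θ₀ ∩ Ici τ) = 0 := (af_zero_iff hW1).mp haτ
      have hat : ∀ t, τ ≤ t → ∀ ys, Integrable (W ν c ys) μ → af ν μ θ₀ c ys t = 0 := by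
        intro t ht ys hw
        rw [af_zero_iff hw]
        exact measure_mono_null
          (show Ioi θ₀ ∩ Ici t ⊆ Ioi θ₀ ∩ Ici τ from fun x hx => ⟨hx.1, le_trans ht hx.2⟩) haμ
      refine hzero_case fun t => ?_
      rcases lt_or_ge t τ with hcase | hcase
      · rcases eq_or_ne (af ν μ θ₀ c y₁ t) 0 with h | h
        · simp [h]
        rcases eq_or_ne (bf ν μ θ₀ c y₁ t) 0 with h' | h'
        · simp [h']
        · have htD := mem_D_of_ab hsupp hW1 h h'
          have := hlt t htD hcase
          exact mul_nonneg (mul_nonneg (by linarith) W_pos.le)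
            (mul_nonneg af_nonneg bf_nonneg)
      · simp [hat t hcase y₁ hW1]
    rcases eq_or_ne (bf ν μ θ₀ c y₁ τ) 0 with hbτ | hbτ
    · -- b vanishes at τ, hence for all t ≤ τ
      have hbμ : μ (Iic θ₀ ∩ Iio τ) = 0 := (bf_zero_iff hW1).mp hbτ
      have hbt : ∀ t, t ≤ τ → ∀ ys, Integrable (W ν c ys) μ → bf ν μ θ₀ c ys t = 0 := by
        intro t ht ys hw
        rw [bf_zero_iff hw]
        exact measure_mono_null
          (show Iic θ₀ ∩ Iio t ⊆ Iic θ₀ ∩ Iio τ from fun x hx => ⟨hx.1, lt_of_lt_of_le hx.2 ht⟩) hbμ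
      refine integral_nonpos fun t => ?_
      rcases le_or_gt t τ with hcase | hcase
      · simp [hbt t hcase y₂ hW2]
      · rcases eq_or_ne (af ν μ θ₀ c y₂ t) 0 with h | h
        · simp [h]
        rcases eq_or_ne (bf ν μ θ₀ c y₂ t) 0 with h' | h'
        · simp [h']
        · have htD := mem_D_of_ab hsupp hW2 h h'
          have := hgt t htD hcase
          exact mul_nonpos_of_nonpos_of_nonneg
            (mul_nonpos_of_nonpos_of_nonneg (by linarith) W_pos.le)
            (mul_nonneg af_nonneg bf_nonneg)
    · -- both positive at τ
      have hPτ1 : 0 < af ν μ θ₀ c y₁ τ * bf ν μ θ₀ c y₁ τ :=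
        mul_pos (lt_of_le_of_ne af_nonneg (Ne.symm haτ))
          (lt_of_le_of_ne bf_nonneg (Ne.symm hbτ))
      set c₀ : ℝ := (af ν μ θ₀ c y₂ τ * bf ν μ θ₀ c y₂ τ) /
          (af ν μ θ₀ c y₁ τ * bf ν μ θ₀ c y₁ τ) with hc₀
      have hc₀0 : 0 ≤ c₀ :=
        div_nonneg (mul_nonneg af_nonneg bf_nonneg) hPτ1.le
      have hpt : ∀ t, rho ν δ t * (af ν μ θ₀ c y₂ t * bf ν μ θ₀ c y₂ t)
          ≤ c₀ * (rho ν δ t * (af ν μ θ₀ c y₁ t * bf ν μ θ₀ c y₁ t)) := by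
        intro t
        rcases eq_or_ne (af ν μ θ₀ c y₁ t) 0 with h | h
        · rw [(haz t).mp h, h]
          simp
        rcases eq_or_ne (bf ν μ θ₀ c y₁ t) 0 with h' | h'
        · rw [(hbz t).mp h', h']
          simp
        have htD := mem_D_of_ab hsupp hW1 h h'
        rcases lt_trichotomy t τ with hcase | hcase | hcase
        · have hρ : 0 ≤ rho ν δ t :=
            mul_nonneg (by linarith [hlt t htD hcase]) W_pos.le
          have hcross := P_cross (θ₀ := θ₀) (t := t) (t' := τ) hcase.le hy hW1 hW2
          have hP2le : af ν μ θ₀ c y₂ t * bf ν μ θ₀ c y₂ t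
              ≤ c₀ * (af ν μ θ₀ c y₁ t * bf ν μ θ₀ c y₁ t) := by
            rw [hc₀, div_mul_eq_mul_div, le_div_iff₀ hPτ1]
            nlinarith [hcross]
          calc rho ν δ t * (af ν μ θ₀ c y₂ t * bf ν μ θ₀ c y₂ t)
              ≤ rho ν δ t * (c₀ * (af ν μ θ₀ c y₁ t * bf ν μ θ₀ c y₁ t)) :=
                mul_le_mul_of_nonneg_left hP2le hρ
            _ = c₀ * (rho ν δ t * (af ν μ θ₀ c y₁ t * bf ν μ θ₀ c y₁ t)) := by ring
        · subst hcase
          have : c₀ * (af ν μ θ₀ c y₁ t * bf ν μ θ₀ c y₁ t)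
              = af ν μ θ₀ c y₂ t * bf ν μ θ₀ c y₂ t := by
            rw [hc₀]; field_simp
          rw [← this]
          ring_nf
          exact le_refl _
        · have hρ : rho ν δ t ≤ 0 :=
            mul_nonpos_of_nonpos_of_nonneg (by linarith [hgt t htD hcase]) W_pos.le
          have hcross := P_cross (θ₀ := θ₀) (t := τ) (t' := t) hcase.le hy hW1 hW2
          have hP2ge : c₀ * (af ν μ θ₀ c y₁ t * bf ν μ θ₀ c y₁ t)
              ≤ af ν μ θ₀ c y₂ t * bf ν μ θ₀ c y₂ t := by
            rw [hc₀, div_mul_eq_mul_div, div_le_iff₀ hPτ1]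
            nlinarith [hcross]
          calc rho ν δ t * (af ν μ θ₀ c y₂ t * bf ν μ θ₀ c y₂ t)
              ≤ rho ν δ t * (c₀ * (af ν μ θ₀ c y₁ t * bf ν μ θ₀ c y₁ t)) :=
                mul_le_mul_of_nonpos_left hP2ge hρ
            _ = c₀ * (rho ν δ t * (af ν μ θ₀ c y₁ t * bf ν μ θ₀ c y₁ t)) := by ring
      calc (∫ t, rho ν δ t * (af ν μ θ₀ c y₂ t * bf ν μ θ₀ c y₂ t) ∂volume)
          ≤ ∫ t, c₀ * (rho ν δ t * (af ν μ θ₀ c y₁ t * bf ν μ θ₀ c y₁ t)) ∂volume :=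
            integral_mono hψ2int (hψ1int.const_mul c₀) hpt
        _ = c₀ * ∫ t, rho ν δ t * (af ν μ θ₀ c y₁ t * bf ν μ θ₀ c y₁ t) ∂volume :=
            integral_const_mul c₀ _
        _ = 0 := by rw [hN1, mul_zero]




section final
variable {ν μ : Measure ℝ} [SigmaFinite ν] [IsProbabilityMeasure μ] {θ₀ : ℝ}

lemma Iic_pos (h1 : μ (Set.Ioi θ₀) < 1) : μ (Iic θ₀) ≠ 0 := by
  intro h
  have hu : (univ : Set ℝ) = Ioi θ₀ ∪ Iic θ₀ := by
    ext x; simp [le_or_gt x θ₀, or_comm]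
  have h2 : μ univ ≤ μ (Ioi θ₀) + μ (Iic θ₀) := hu ▸ measure_union_le _ _
  rw [h, add_zero, measure_univ] at h2
  exact absurd (lt_of_le_of_lt h2 h1) (lt_irrefl _)

lemma q_eq (n : ℕ) (y : ℝ) (hW : Integrable (W ν (n:ℝ) y) μ) :
    q ν μ θ₀ n y = (∫ u in Ioi θ₀, W ν (n:ℝ) y u ∂μ) /
      ((∫ u in Ioi θ₀, W ν (n:ℝ) y u ∂μ) + (∫ u in Iic θ₀, W ν (n:ℝ) y u ∂μ)) := by
  have hZ : Z ν μ n y = (∫ u in Ioi θ₀, W ν (n:ℝ) y u ∂μ) +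
      (∫ u in Iic θ₀, W ν (n:ℝ) y u ∂μ) := by
    have := integral_add_compl (measurableSet_Ioi (a := θ₀)) hW
    rw [compl_Ioi] at this
    exact this.symm
  show (∫ u in Ioi θ₀, W ν (n:ℝ) y u ∂μ) / Z ν μ n y = _
  rw [hZ]

lemma q_strict (h0 : μ (Set.Ioi θ₀) ≠ 0) (h1 : μ (Set.Ioi θ₀) < 1)
    (n : ℕ) {ya yb : ℝ} (hab : ya < yb)
    (hWa : Integrable (W ν (n:ℝ) ya) μ) (hWb : Integrable (W ν (n:ℝ) yb) μ) :
    q ν μ θ₀ n ya < q ν μ θ₀ n yb := by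
  have hT := Iic_pos h1
  have hISa := setIntegral_W_pos measurableSet_Ioi h0 hWa
  have hISb := setIntegral_W_pos measurableSet_Ioi h0 hWb
  have hITa := setIntegral_W_pos measurableSet_Iic hT hWa
  have hITb := setIntegral_W_pos measurableSet_Iic hT hWb
  rw [q_eq n ya hWa, q_eq n yb hWb, div_lt_div_iff₀ (by linarith) (by linarith)]
  have hcross := cross_lt (ν := ν) (μ := μ) (c := (n:ℝ))
    measurableSet_Ioi measurableSet_Iic hab
    (fun p hp r hr => lt_of_le_of_lt hr hp) h0 hT hWa hWb
  nlinarith [hcross]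

end final

theorem level_curves_spread' (ν μ : Measure ℝ) [SigmaFinite ν]
    [IsProbabilityMeasure μ] (θ₀ : ℝ) (Y : ℕ → ℝ → ℝ)
    (hsupp : msupport μ ⊆ interior (expDom ν))
    (h0 : 0 < μ (Set.Ioi θ₀)) (h1 : μ (Set.Ioi θ₀) < 1)
    (hint : ∀ (n : ℕ) (y : ℝ),
      Integrable (fun u => (1 + |u|) * Real.exp (u * y - (n : ℝ) * cgf ν u)) μ)
    (hY : ∀ (n : ℕ), ∀ p ∈ Set.Ioo (0 : ℝ) 1, q ν μ θ₀ n (Y n p) = p)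
    (p₁ p₂ : ℝ) (hp₁ : 0 < p₁) (hp₁₂ : p₁ < p₂) (hp₂ : p₂ < 1) :
    Monotone (fun n : ℕ => Y n p₂ - Y n p₁) := by
  have h0' : μ (Set.Ioi θ₀) ≠ 0 := h0.ne'
  have hWint : ∀ (m : ℕ) (y : ℝ), Integrable (W ν (m:ℝ) y) μ := fun m y =>
    integrable_W (hint m y)
  have hp₁I : p₁ ∈ Set.Ioo (0:ℝ) 1 := ⟨hp₁, hp₁₂.trans hp₂⟩
  have hp₂I : p₂ ∈ Set.Ioo (0:ℝ) 1 := ⟨hp₁.trans hp₁₂, hp₂⟩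
  have hT' : μ (Iic θ₀) ≠ 0 := Iic_pos h1
  apply monotone_nat_of_le_succ
  intro n
  show Y n p₂ - Y n p₁ ≤ Y (n+1) p₂ - Y (n+1) p₁
  set y₁ := Y n p₁ with hy₁
  set y₂ := Y n p₂ with hy₂
  set δ := Y (n+1) p₁ - y₁ with hδ
  have hcast : ((n+1 : ℕ) : ℝ) = (n : ℝ) + 1 := by push_cast; ring
  have hWsucc : ∀ z : ℝ, Integrable (W ν ((n:ℝ)+1) z) μ := fun z => by
    rw [← hcast]; exact hWint (n+1) z
  have hq₁ : q ν μ θ₀ n y₁ = p₁ := hY n p₁ hp₁I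
  have hq₂ : q ν μ θ₀ n y₂ = p₂ := hY n p₂ hp₂I
  have hq₁' : q ν μ θ₀ (n+1) (Y (n+1) p₁) = p₁ := hY (n+1) p₁ hp₁I
  have hq₂' : q ν μ θ₀ (n+1) (Y (n+1) p₂) = p₂ := hY (n+1) p₂ hp₂I
  have hy12 : y₁ < y₂ := by
    rcases lt_trichotomy y₁ y₂ with h | h | h
    · exact h
    · rw [← hq₁, ← hq₂, h] at hp₁₂; exact absurd hp₁₂ (lt_irrefl _)
    · have := q_strict h0' h1 n h (hWint n y₂) (hWint n y₁)
      rw [hq₁, hq₂] at this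
      exact absurd (hp₁₂.trans this) (lt_irrefl _)
  -- the integrand identity
  have hWid : ∀ (z : ℝ), (fun u => W ν ((n+1:ℕ):ℝ) (z+δ) u) =
      fun u => W ν 1 δ u * W ν (n:ℝ) z u := by
    intro z
    funext u
    rw [hcast]
    exact W_split
  have hq_shift : ∀ z : ℝ, q ν μ θ₀ (n+1) (z+δ)
      = (∫ u in Ioi θ₀, W ν 1 δ u * W ν (n:ℝ) z u ∂μ) /
        ((∫ u in Ioi θ₀, W ν 1 δ u * W ν (n:ℝ) z u ∂μ)
          + (∫ v in Iic θ₀, W ν 1 δ v * W ν (n:ℝ) z v ∂μ)) := by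
    intro z
    rw [q_eq (n+1) (z+δ) (hWint (n+1) (z+δ)), hWid z]
  have hApos : ∀ z : ℝ, 0 < ∫ u in Ioi θ₀, W ν 1 δ u * W ν (n:ℝ) z u ∂μ := fun z => by
    rw [← hWid z]
    exact setIntegral_W_pos measurableSet_Ioi h0' (hWint (n+1) (z+δ))
  have hBpos : ∀ z : ℝ, 0 < ∫ v in Iic θ₀, W ν 1 δ v * W ν (n:ℝ) z v ∂μ := fun z => by
    rw [← hWid z]
    exact setIntegral_W_pos measurableSet_Iic hT' (hWint (n+1) (z+δ))
  have hCpos : ∀ z : ℝ, 0 < ∫ u in Ioi θ₀, W ν (n:ℝ) z u ∂μ := fun z =>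
    setIntegral_W_pos measurableSet_Ioi h0' (hWint n z)
  have hDpos : ∀ z : ℝ, 0 < ∫ v in Iic θ₀, W ν (n:ℝ) z v ∂μ := fun z =>
    setIntegral_W_pos measurableSet_Iic hT' (hWint n z)
  -- cross equality at y₁
  have he : q ν μ θ₀ (n+1) (y₁+δ) = q ν μ θ₀ n y₁ := by
    rw [show y₁ + δ = Y (n+1) p₁ by rw [hδ]; ring, hq₁', hq₁]
  rw [hq_shift y₁, q_eq n y₁ (hWint n y₁),
    div_eq_div_iff (by linarith [hApos y₁, hBpos y₁]) (by linarith [hCpos y₁, hDpos y₁])] at he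
  have hN1 : (∫ u in Ioi θ₀, W ν 1 δ u * W ν (n:ℝ) y₁ u ∂μ) *
        (∫ v in Iic θ₀, W ν (n:ℝ) y₁ v ∂μ)
      - (∫ u in Ioi θ₀, W ν (n:ℝ) y₁ u ∂μ) *
        (∫ v in Iic θ₀, W ν 1 δ v * W ν (n:ℝ) y₁ v ∂μ) = 0 := by linear_combination he
  have hfinal := N_nonpos (θ₀ := θ₀) hsupp hy12.le (hWint n y₁) (hWint n y₂)
    (hWsucc (y₁+δ)) (hWsucc (y₂+δ)) hN1
  -- q(n+1, y₂+δ) ≤ p₂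
  have h2 : q ν μ θ₀ (n+1) (y₂+δ) ≤ p₂ := by
    rw [← hq₂, hq_shift y₂, q_eq n y₂ (hWint n y₂),
      div_le_div_iff₀ (by linarith [hApos y₂, hBpos y₂]) (by linarith [hCpos y₂, hDpos y₂])]
    nlinarith [hfinal]
  have h3 : y₂ + δ ≤ Y (n+1) p₂ := by
    by_contra hc
    push_neg at hc
    have := q_strict h0' h1 (n+1) hc (hWint (n+1) (Y (n+1) p₂)) (hWint (n+1) (y₂+δ))
    rw [hq₂'] at this
    linarith
  have h4 : Y (n+1) p₁ = y₁ + δ := by rw [hδ]; ring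
  linarith


end LCS


/-- The level curves spread out along the time axis: for `0 < p₁ < p₂ < 1`,
the map `n ↦ y(n,p₂) - y(n,p₁)` is nondecreasing. -/
theorem level_curves_spread (ν μ : Measure ℝ) [SigmaFinite ν]
    [IsProbabilityMeasure μ] (θ₀ : ℝ) (Y : ℕ → ℝ → ℝ)
    (hsupp : msupport μ ⊆ interior (expDom ν))
    (h0 : 0 < μ (Set.Ioi θ₀)) (h1 : μ (Set.Ioi θ₀) < 1)
    (hint : ∀ (n : ℕ) (y : ℝ),
      Integrable (fun u => (1 + |u|) * Real.exp (u * y - (n : ℝ) * cgf ν u)) μ)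
    (hY : ∀ (n : ℕ), ∀ p ∈ Set.Ioo (0 : ℝ) 1, q ν μ θ₀ n (Y n p) = p)
    (p₁ p₂ : ℝ) (hp₁ : 0 < p₁) (hp₁₂ : p₁ < p₂) (hp₂ : p₂ < 1) :
    Monotone (fun n : ℕ => Y n p₂ - Y n p₁) :=
  LCS.level_curves_spread' ν μ θ₀ Y hsupp h0 h1 hint hY p₁ p₂ hp₁ hp₁₂ hp₂
end

section
/- Fix π ∈ (0,1). Then the map n ↦ ∫_{(θ₀,∞)} u dμ_{n, y(n,π)}(u) − π · ∫_ℝ u dμ_{n, y(n,π)}(u) (the covariance of Θ and 1_{{Θ>θ₀}} under the posterior distribution along the π-level curve) is nonincreasing in n ∈ ℕ. -/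
open MeasureTheory Real Set Filter

/-- The posterior distribution `μ_{n,y}(du) = e^{uy - nB(u)} μ(du) / Z(n,y)`. -/
noncomputable def post (ν μ : Measure ℝ) (n : ℕ) (y : ℝ) : Measure ℝ :=
  (ENNReal.ofReal (Z ν μ n y))⁻¹ •
    μ.withDensity (fun u => ENNReal.ofReal (Real.exp (u * y - (n : ℝ) * cgf ν u)))


open scoped ENNReal NNReal

section Aux

lemma measurable_cgf (ν : Measure ℝ) [SigmaFinite ν] : Measurable (cgf ν) := by
  have h : StronglyMeasurable fun u : ℝ => ∫ x, Real.exp (u * x) ∂ν := by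
    have : StronglyMeasurable fun p : ℝ × ℝ => Real.exp (p.1 * p.2) :=
      (Real.continuous_exp.comp (continuous_fst.mul continuous_snd)).stronglyMeasurable
    exact this.integral_prod_right'
  exact Real.measurable_log.comp h.measurable

lemma msupport_compl_null (μ : Measure ℝ) : μ (msupport μ)ᶜ = 0 := by
  have hcov : ∀ x : ((msupport μ)ᶜ : Set ℝ), ∃ V : Set ℝ, IsOpen V ∧ (x : ℝ) ∈ V ∧ μ V = 0 := by
    rintro ⟨x, hx⟩
    simp only [msupport, mem_compl_iff, mem_setOf_eq, not_forall] at hx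
    obtain ⟨U, hU, hU0⟩ := hx
    obtain ⟨V, hVU, hVo, hxV⟩ := mem_nhds_iff.1 hU
    refine ⟨V, hVo, hxV, le_antisymm ?_ (by simp)⟩
    rw [not_not] at hU0
    exact hU0 ▸ measure_mono hVU
  choose V hVo hxV hV0 using hcov
  obtain ⟨T, hTc, hTeq⟩ := TopologicalSpace.isOpen_iUnion_countable V hVo
  have hsub : (msupport μ)ᶜ ⊆ ⋃ i ∈ T, V i := by
    rw [hTeq]
    exact fun x hx => mem_iUnion.2 ⟨⟨x, hx⟩, hxV _⟩
  exact measure_mono_null hsub ((measure_biUnion_null_iff hTc).2 fun i _ => hV0 i)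

lemma exp_interp (ν : Measure ℝ) {u v : ℝ}
    (hu : Integrable (fun x => Real.exp (u*x)) ν) (hv : Integrable (fun x => Real.exp (v*x)) ν)
    {a b : ℝ} (ha : 0 < a) (hb : 0 < b) (hab : a + b = 1) :
    Integrable (fun x => Real.exp ((a*u + b*v)*x)) ν ∧
    ∫ x, Real.exp ((a*u+b*v)*x) ∂ν ≤
      (∫ x, Real.exp (u*x) ∂ν) ^ a * (∫ x, Real.exp (v*x) ∂ν) ^ b := by
  have ha1 : a < 1 := by linarith
  have hconj : Real.HolderConjugate (1/a) (1/b) := by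
    rw [Real.holderConjugate_iff]
    constructor
    · rw [lt_div_iff₀ ha, one_mul]; exact ha1
    · rw [one_div, one_div, inv_inv, inv_inv]; exact hab
  have hmeas : ∀ t : ℝ, Measurable fun x : ℝ => ENNReal.ofReal (Real.exp (t*x)) := fun t =>
    (measurable_const.mul measurable_id).exp.ennreal_ofReal
  set f : ℝ → ℝ≥0∞ := fun x => ENNReal.ofReal (Real.exp (u*x)) with hf
  set g : ℝ → ℝ≥0∞ := fun x => ENNReal.ofReal (Real.exp (v*x)) with hg
  have H := ENNReal.lintegral_mul_le_Lp_mul_Lq ν hconj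
    (((hmeas u).pow_const a).aemeasurable) (((hmeas v).pow_const b).aemeasurable)
  have hFG : ∀ x : ℝ, f x ^ a * g x ^ b = ENNReal.ofReal (Real.exp ((a*u+b*v)*x)) := by
    intro x
    rw [hf, hg]
    rw [ENNReal.ofReal_rpow_of_pos (Real.exp_pos _), ENNReal.ofReal_rpow_of_pos (Real.exp_pos _),
      ← ENNReal.ofReal_mul (by positivity), ← Real.exp_mul, ← Real.exp_mul, ← Real.exp_add]
    ring_nf
  have hFa : ∀ x : ℝ, (f x ^ a) ^ (1/a : ℝ) = f x := by
    intro x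
    rw [← ENNReal.rpow_mul, mul_one_div_cancel ha.ne', ENNReal.rpow_one]
  have hGb : ∀ x : ℝ, (g x ^ b) ^ (1/b : ℝ) = g x := by
    intro x
    rw [← ENNReal.rpow_mul, mul_one_div_cancel hb.ne', ENNReal.rpow_one]
  simp only [hf, hg] at hFG hFa hGb
  simp only [Pi.mul_apply, hFG, hFa, hGb, one_div_one_div] at H
  have hIu : ∫⁻ x, f x ∂ν < ⊤ := hu.lintegral_lt_top
  have hIv : ∫⁻ x, g x ∂ν < ⊤ := hv.lintegral_lt_top
  have hRHS : (∫⁻ x, f x ∂ν) ^ a * (∫⁻ x, g x ∂ν) ^ b < ⊤ :=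
    ENNReal.mul_lt_top (ENNReal.rpow_lt_top_of_nonneg ha.le hIu.ne)
      (ENNReal.rpow_lt_top_of_nonneg hb.le hIv.ne)
  have hLHS : ∫⁻ x, ENNReal.ofReal (Real.exp ((a*u+b*v)*x)) ∂ν < ⊤ := lt_of_le_of_lt H hRHS
  have hwint : Integrable (fun x => Real.exp ((a*u+b*v)*x)) ν := by
    have := integrable_toReal_of_lintegral_ne_top (hmeas (a*u+b*v)).aemeasurable hLHS.ne
    refine this.congr (Filter.Eventually.of_forall fun x => ?_)
    exact ENNReal.toReal_ofReal (Real.exp_pos _).le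
  refine ⟨hwint, ?_⟩
  have hieq : ∀ (t : ℝ), ∫ x, Real.exp (t*x) ∂ν = (∫⁻ x, ENNReal.ofReal (Real.exp (t*x)) ∂ν).toReal := by
    intro t
    rw [integral_eq_lintegral_of_nonneg_ae (Filter.Eventually.of_forall fun x => (Real.exp_pos _).le)
      (by exact ((measurable_id.const_mul t).exp).aestronglyMeasurable : AEStronglyMeasurable (fun x : ℝ => Real.exp (t*x)) ν)]
  rw [hieq, hieq, hieq]
  calc (∫⁻ x, ENNReal.ofReal (Real.exp ((a*u+b*v)*x)) ∂ν).toReal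
      ≤ ((∫⁻ x, f x ∂ν) ^ a * (∫⁻ x, g x ∂ν) ^ b).toReal := ENNReal.toReal_mono hRHS.ne H
    _ = (∫⁻ x, f x ∂ν).toReal ^ a * (∫⁻ x, g x ∂ν).toReal ^ b := by
        rw [ENNReal.toReal_mul, ENNReal.toReal_rpow, ENNReal.toReal_rpow]

lemma convex_expDom (ν : Measure ℝ) : Convex ℝ (expDom ν) := by
  intro x hx y hy a b ha hb hab
  rcases eq_or_lt_of_le ha with rfl | ha'
  · have hb1 : b = 1 := by linarith
    simpa [hb1] using hy
  rcases eq_or_lt_of_le hb with rfl | hb'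
  · have ha1 : a = 1 := by linarith
    simpa [ha1] using hx
  exact (exp_interp ν hx hy ha' hb' hab).1

lemma convexOn_cgf (ν : Measure ℝ) : ConvexOn ℝ (expDom ν) (cgf ν) := by
  refine ⟨convex_expDom ν, ?_⟩
  intro x hx y hy a b ha hb hab
  simp only [smul_eq_mul]
  rcases eq_or_lt_of_le ha with rfl | ha'
  · have : b = 1 := by linarith
    simp [this]
  rcases eq_or_lt_of_le hb with rfl | hb'
  · have : a = 1 := by linarith
    simp [this]
  rcases eq_or_ne ν 0 with rfl | hν
  · simp [cgf]
  haveI : NeZero ν := ⟨hν⟩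
  have hIx : 0 < ∫ t, Real.exp (x*t) ∂ν := integral_exp_pos hx
  have hIy : 0 < ∫ t, Real.exp (y*t) ∂ν := integral_exp_pos hy
  have h := (exp_interp ν hx hy ha' hb' hab).2
  have hL : 0 < ∫ t, Real.exp ((a*x+b*y)*t) ∂ν :=
    integral_exp_pos (exp_interp ν hx hy ha' hb' hab).1
  calc cgf ν (a*x+b*y) = Real.log (∫ t, Real.exp ((a*x+b*y)*t) ∂ν) := rfl
    _ ≤ Real.log ((∫ t, Real.exp (x*t) ∂ν) ^ a * (∫ t, Real.exp (y*t) ∂ν) ^ b) :=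
        Real.log_le_log hL h
    _ = a * cgf ν x + b * cgf ν y := by
        rw [Real.log_mul (by positivity) (by positivity), Real.log_rpow hIx, Real.log_rpow hIy]
        rfl

section key
variable {μ : Measure ℝ} {D : ℝ → ℝ} {J K : Set ℝ} {θ₀ : ℝ}

lemma key_upper (hJ : ∀ᵐ u ∂μ, u ∈ J) (hK : Convex ℝ K)
    (hpos : ∀ u ∈ J, u ∈ K → 0 ≤ D u) (hneg : ∀ u ∈ J, u ∉ K → D u < 0)
    (hD : Integrable D μ) (hDu : Integrable (fun u => (u - θ₀) * D u) μ)
    (hIoi : ∫ u in Ioi θ₀, D u ∂μ = 0) (hIic : ∫ u in Iic θ₀, D u ∂μ = 0)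
    (hlow : μ (Iic θ₀) ≠ 0) :
    ∫ u in Ioi θ₀, (u - θ₀) * D u ∂μ ≤ 0 := by
  -- Step 1: find k₀ ∈ K with k₀ ≤ θ₀
  obtain ⟨k₀, hk₀K, hk₀⟩ : ∃ k ∈ K, k ≤ θ₀ := by
    by_contra hcon
    push_neg at hcon
    have hres : ∀ᵐ u ∂μ.restrict (Iic θ₀), D u < 0 := by
      filter_upwards [ae_restrict_of_ae hJ, ae_restrict_mem measurableSet_Iic] with u hu1 hu2
      exact hneg u hu1 fun hu => absurd hu2 (not_le.2 (hcon u hu))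
    have hzero : (fun u => -D u) =ᵐ[μ.restrict (Iic θ₀)] 0 := by
      refine (integral_eq_zero_iff_of_nonneg_ae ?_ hD.neg.restrict).1 ?_
      · filter_upwards [hres] with u hu; simpa using hu.le
      · simp [integral_neg, hIic]
    haveI : (ae (μ.restrict (Iic θ₀))).NeBot :=
      ae_neBot.2 (fun h => hlow (Measure.restrict_eq_zero.1 h))
    obtain ⟨u, hu1, hu2⟩ := (hres.and hzero).exists
    simp only [Pi.zero_apply, neg_eq_zero] at hu2
    linarith
  by_cases hB : BddAbove (K ∩ Ioi θ₀)
  · -- bounded case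
    set S : Set ℝ := insert θ₀ (K ∩ Ioi θ₀) with hS
    have hSne : S.Nonempty := ⟨θ₀, mem_insert _ _⟩
    have hSbdd : BddAbove S := hB.insert θ₀
    set b : ℝ := sSup S with hb
    have hbθ : θ₀ ≤ b := le_csSup hSbdd (mem_insert _ _)
    have key : ∀ᵐ u ∂μ.restrict (Ioi θ₀), (u - θ₀) * D u ≤ (b - θ₀) * D u := by
      filter_upwards [ae_restrict_of_ae hJ, ae_restrict_mem measurableSet_Ioi] with u huJ huI
      have huθ : θ₀ < u := huI
      rcases lt_trichotomy u b with h | h | h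
      · obtain ⟨k', hk'S, huk'⟩ := exists_lt_of_lt_csSup hSne h
        have hk'K : k' ∈ K := by
          rcases hk'S with rfl | hk'
          · exact absurd (huθ.trans huk') (lt_irrefl _)
          · exact hk'.1
        have huK : u ∈ K := hK.ordConnected.out hk₀K hk'K ⟨by linarith, huk'.le⟩
        exact mul_le_mul_of_nonneg_right (by linarith) (hpos u huJ huK)
      · rw [h]
      · have huK : u ∉ K := fun hu =>
          absurd (le_csSup hSbdd (mem_insert_of_mem _ ⟨hu, huI⟩)) (not_le.2 h)
        exact mul_le_mul_of_nonpos_right (by linarith) (hneg u huJ huK).le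
    calc ∫ u in Ioi θ₀, (u - θ₀) * D u ∂μ
        ≤ ∫ u in Ioi θ₀, (b - θ₀) * D u ∂μ :=
          integral_mono_ae hDu.restrict (hD.restrict.const_mul _) key
      _ = (b - θ₀) * ∫ u in Ioi θ₀, D u ∂μ := integral_const_mul _ _
      _ = 0 := by rw [hIoi, mul_zero]
  · -- unbounded case : D = 0 a.e. on (θ₀, ∞)
    have hae : ∀ᵐ u ∂μ.restrict (Ioi θ₀), 0 ≤ D u := by
      filter_upwards [ae_restrict_of_ae hJ, ae_restrict_mem measurableSet_Ioi] with u hu1 hu2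
      obtain ⟨k', ⟨hk'K, _⟩, huk'⟩ := (not_bddAbove_iff.1 hB) u
      have huθ : θ₀ < u := hu2
      have huK : u ∈ K := hK.ordConnected.out hk₀K hk'K ⟨by linarith, huk'.le⟩
      exact hpos u hu1 huK
    have hzero : D =ᵐ[μ.restrict (Ioi θ₀)] 0 :=
      (integral_eq_zero_iff_of_nonneg_ae hae hD.restrict).1 hIoi
    have : ∫ u in Ioi θ₀, (u - θ₀) * D u ∂μ = 0 := by
      rw [integral_congr_ae (g := fun _ => (0:ℝ)) ?_, integral_zero]
      filter_upwards [hzero] with u hu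
      simp [hu]
    exact this.le

lemma key_lower (hJ : ∀ᵐ u ∂μ, u ∈ J) (hK : Convex ℝ K)
    (hpos : ∀ u ∈ J, u ∈ K → 0 ≤ D u) (hneg : ∀ u ∈ J, u ∉ K → D u < 0)
    (hD : Integrable D μ) (hDu : Integrable (fun u => (θ₀ - u) * D u) μ)
    (hIoi : ∫ u in Ioi θ₀, D u ∂μ = 0) (hIic : ∫ u in Iic θ₀, D u ∂μ = 0)
    (hupp : μ (Ioi θ₀) ≠ 0) :
    ∫ u in Iic θ₀, (θ₀ - u) * D u ∂μ ≤ 0 := by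
  obtain ⟨k₁, hk₁K, hk₁⟩ : ∃ k ∈ K, θ₀ < k := by
    by_contra hcon
    push_neg at hcon
    have hres : ∀ᵐ u ∂μ.restrict (Ioi θ₀), D u < 0 := by
      filter_upwards [ae_restrict_of_ae hJ, ae_restrict_mem measurableSet_Ioi] with u hu1 hu2
      exact hneg u hu1 fun hu => absurd (hcon u hu) (not_le.2 hu2)
    have hzero : (fun u => -D u) =ᵐ[μ.restrict (Ioi θ₀)] 0 := by
      refine (integral_eq_zero_iff_of_nonneg_ae ?_ hD.neg.restrict).1 ?_
      · filter_upwards [hres] with u hu; simpa using hu.le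
      · simp [integral_neg, hIoi]
    haveI : (ae (μ.restrict (Ioi θ₀))).NeBot :=
      ae_neBot.2 (fun h => hupp (Measure.restrict_eq_zero.1 h))
    obtain ⟨u, hu1, hu2⟩ := (hres.and hzero).exists
    simp only [Pi.zero_apply, neg_eq_zero] at hu2
    linarith
  by_cases hB : BddBelow (K ∩ Iio θ₀)
  · set S : Set ℝ := insert θ₀ (K ∩ Iio θ₀) with hS
    have hSne : S.Nonempty := ⟨θ₀, mem_insert _ _⟩
    have hSbdd : BddBelow S := hB.insert θ₀
    set a : ℝ := sInf S with hadef
    have haθ : a ≤ θ₀ := csInf_le hSbdd (mem_insert _ _)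
    have key : ∀ᵐ u ∂μ.restrict (Iic θ₀), (θ₀ - u) * D u ≤ (θ₀ - a) * D u := by
      filter_upwards [ae_restrict_of_ae hJ, ae_restrict_mem measurableSet_Iic] with u huJ huI
      have huθ : u ≤ θ₀ := huI
      rcases lt_trichotomy u a with h | h | h
      · have huK : u ∉ K := fun hu =>
          absurd (csInf_le hSbdd (mem_insert_of_mem _ ⟨hu, lt_of_lt_of_le h haθ⟩)) (not_le.2 h)
        exact mul_le_mul_of_nonpos_right (by linarith) (hneg u huJ huK).le
      · rw [h]
      · obtain ⟨k', hk'S, huk'⟩ := exists_lt_of_csInf_lt hSne h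
        have hk'K : k' ∈ K := by
          rcases hk'S with rfl | hk'
          · exact absurd (huk'.trans_le huθ) (lt_irrefl _)
          · exact hk'.1
        have huK : u ∈ K := hK.ordConnected.out hk'K hk₁K ⟨huk'.le, by linarith⟩
        exact mul_le_mul_of_nonneg_right (by linarith) (hpos u huJ huK)
    calc ∫ u in Iic θ₀, (θ₀ - u) * D u ∂μ
        ≤ ∫ u in Iic θ₀, (θ₀ - a) * D u ∂μ :=
          integral_mono_ae hDu.restrict (hD.restrict.const_mul _) key
      _ = (θ₀ - a) * ∫ u in Iic θ₀, D u ∂μ := integral_const_mul _ _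
      _ = 0 := by rw [hIic, mul_zero]
  · have hae : ∀ᵐ u ∂μ.restrict (Iic θ₀), 0 ≤ D u := by
      filter_upwards [ae_restrict_of_ae hJ, ae_restrict_mem measurableSet_Iic] with u hu1 hu2
      obtain ⟨k', ⟨hk'K, _⟩, huk'⟩ := (not_bddBelow_iff.1 hB) u
      have huθ : u ≤ θ₀ := hu2
      have huK : u ∈ K := hK.ordConnected.out hk'K hk₁K ⟨huk'.le, by linarith⟩
      exact hpos u hu1 huK
    have hzero : D =ᵐ[μ.restrict (Iic θ₀)] 0 :=
      (integral_eq_zero_iff_of_nonneg_ae hae hD.restrict).1 hIic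
    have : ∫ u in Iic θ₀, (θ₀ - u) * D u ∂μ = 0 := by
      rw [integral_congr_ae (g := fun _ => (0:ℝ)) ?_, integral_zero]
      filter_upwards [hzero] with u hu
      simp [hu]
    exact this.le

end key

end Aux

/-- Along a `p`-level curve, the covariance of `Θ` and `1_{Θ>θ₀}` under the
posterior distribution, namely
`∫_{(θ₀,∞)} u dμ_{n,y(n,p)} - p ∫ u dμ_{n,y(n,p)}`, is nonincreasing in `n`. -/
theorem posterior_covariance_antitone (ν μ : Measure ℝ) [SigmaFinite ν]
    [IsProbabilityMeasure μ] (θ₀ : ℝ) (Y : ℕ → ℝ → ℝ)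
    (hsupp : msupport μ ⊆ interior (expDom ν))
    (h0 : 0 < μ (Set.Ioi θ₀)) (h1 : μ (Set.Ioi θ₀) < 1)
    (hint : ∀ (n : ℕ) (y : ℝ),
      Integrable (fun u => (1 + |u|) * Real.exp (u * y - (n : ℝ) * cgf ν u)) μ)
    (hY : ∀ (n : ℕ), ∀ p ∈ Set.Ioo (0 : ℝ) 1, q ν μ θ₀ n (Y n p) = p)
    (p : ℝ) (hp : p ∈ Set.Ioo (0 : ℝ) 1) :
    Antitone (fun n : ℕ =>
      (∫ u in Set.Ioi θ₀, u ∂(post ν μ n (Y n p))) -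
        p * ∫ u, u ∂(post ν μ n (Y n p))) := by
  obtain ⟨hp0, hp1⟩ := hp
  haveI : NeZero μ := ⟨IsProbabilityMeasure.ne_zero μ⟩
  have hcm : Measurable (cgf ν) := measurable_cgf ν
  have hwmeas : ∀ (m : ℕ) (y : ℝ), Measurable fun u : ℝ => rexp (u * y - (m : ℝ) * cgf ν u) :=
    fun m y => ((measurable_id.mul_const y).sub (hcm.const_mul _)).exp
  have hwint : ∀ (m : ℕ) (y : ℝ), Integrable (fun u : ℝ => rexp (u * y - (m : ℝ) * cgf ν u)) μ := by
    intro m y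
    refine (hint m y).mono (hwmeas m y).aestronglyMeasurable (Eventually.of_forall fun u => ?_)
    have h1 : ‖rexp (u * y - (m : ℝ) * cgf ν u)‖ = rexp (u * y - (m : ℝ) * cgf ν u) :=
      Real.norm_eq_abs _ ▸ abs_of_pos (exp_pos _)
    have h2 : ‖(1 + |u|) * rexp (u * y - (m : ℝ) * cgf ν u)‖ =
        (1 + |u|) * rexp (u * y - (m : ℝ) * cgf ν u) :=
      Real.norm_eq_abs _ ▸ abs_of_nonneg (by positivity)
    rw [h1, h2]
    nlinarith [abs_nonneg u, (Real.exp_pos (u * y - (m : ℝ) * cgf ν u)).le]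
  have huwint : ∀ (m : ℕ) (y : ℝ),
      Integrable (fun u : ℝ => rexp (u * y - (m : ℝ) * cgf ν u) * u) μ := by
    intro m y
    refine (hint m y).mono ((hwmeas m y).mul measurable_id).aestronglyMeasurable
      (Eventually.of_forall fun u => ?_)
    have h1 : ‖rexp (u * y - (m : ℝ) * cgf ν u) * u‖ = rexp (u * y - (m : ℝ) * cgf ν u) * |u| := by
      rw [Real.norm_eq_abs, abs_mul, abs_of_pos (exp_pos _)]
    have h2 : ‖(1 + |u|) * rexp (u * y - (m : ℝ) * cgf ν u)‖ =
        (1 + |u|) * rexp (u * y - (m : ℝ) * cgf ν u) :=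
      Real.norm_eq_abs _ ▸ abs_of_nonneg (by positivity)
    rw [h1, h2]
    nlinarith [abs_nonneg u, (Real.exp_pos (u * y - (m : ℝ) * cgf ν u)).le]
  have hsubint : ∀ (m : ℕ) (y : ℝ),
      Integrable (fun u : ℝ => (u - θ₀) * rexp (u * y - (m : ℝ) * cgf ν u)) μ := by
    intro m y
    have : (fun u : ℝ => (u - θ₀) * rexp (u * y - (m : ℝ) * cgf ν u)) =
        fun u => rexp (u * y - (m : ℝ) * cgf ν u) * u - θ₀ * rexp (u * y - (m : ℝ) * cgf ν u) :=
      funext fun u => by ring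
    rw [this]
    exact (huwint m y).sub ((hwint m y).const_mul θ₀)
  have hsubint2 : ∀ (m : ℕ) (y : ℝ),
      Integrable (fun u : ℝ => (θ₀ - u) * rexp (u * y - (m : ℝ) * cgf ν u)) μ := by
    intro m y
    have : (fun u : ℝ => (θ₀ - u) * rexp (u * y - (m : ℝ) * cgf ν u)) =
        fun u => θ₀ * rexp (u * y - (m : ℝ) * cgf ν u) - rexp (u * y - (m : ℝ) * cgf ν u) * u :=
      funext fun u => by ring
    rw [this]
    exact ((hwint m y).const_mul θ₀).sub (huwint m y)
  have hZpos : ∀ (m : ℕ) (y : ℝ), 0 < Z ν μ m y := fun m y => integral_exp_pos (hwint m y)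
  -- posterior integrals
  have hpostset : ∀ (m : ℕ) (y : ℝ) (g : ℝ → ℝ) (s : Set ℝ), MeasurableSet s →
      ∫ u in s, g u ∂(post ν μ m y) =
        (∫ u in s, rexp (u * y - (m : ℝ) * cgf ν u) * g u ∂μ) / Z ν μ m y := by
    intro m y g s hs
    rw [post, Measure.restrict_smul, integral_smul_measure]
    have hd : (fun u : ℝ => ENNReal.ofReal (rexp (u * y - (m : ℝ) * cgf ν u))) =
        fun u : ℝ => ((rexp (u * y - (m : ℝ) * cgf ν u)).toNNReal : ℝ≥0∞) := rfl
    rw [hd, setIntegral_withDensity_eq_setIntegral_smul (hwmeas m y).real_toNNReal g hs]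
    have he : (fun u => (rexp (u * y - (m : ℝ) * cgf ν u)).toNNReal • g u) =
        fun u : ℝ => rexp (u * y - (m : ℝ) * cgf ν u) * g u := by
      funext u
      rw [NNReal.smul_def, Real.coe_toNNReal _ (exp_pos _).le, smul_eq_mul]
    rw [he, ENNReal.toReal_inv, ENNReal.toReal_ofReal (hZpos m y).le, smul_eq_mul,
      div_eq_mul_inv, mul_comm]
  have hpostfull : ∀ (m : ℕ) (y : ℝ) (g : ℝ → ℝ),
      ∫ u, g u ∂(post ν μ m y) =
        (∫ u, rexp (u * y - (m : ℝ) * cgf ν u) * g u ∂μ) / Z ν μ m y := by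
    intro m y g
    rw [← setIntegral_univ, hpostset m y g univ MeasurableSet.univ, setIntegral_univ]
  -- level-curve identity
  have hA : ∀ (m : ℕ),
      ∫ u in Ioi θ₀, rexp (u * Y m p - (m : ℝ) * cgf ν u) ∂μ = p * Z ν μ m (Y m p) := by
    intro m
    have h := hY m p ⟨hp0, hp1⟩
    rw [q, div_eq_iff (hZpos m (Y m p)).ne'] at h
    rw [h]
  -- a.e. in the interior of the domain
  have hJae : ∀ᵐ u ∂μ, u ∈ interior (expDom ν) := by
    have : μ (interior (expDom ν))ᶜ = 0 :=
      measure_mono_null (compl_subset_compl.2 hsupp) (msupport_compl_null μ)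
    exact (MeasureTheory.mem_ae_iff).2 this
  have hlow : μ (Iic θ₀) ≠ 0 := by
    intro h
    have hcompl := measure_add_measure_compl (μ := μ) (measurableSet_Ioi : MeasurableSet (Ioi θ₀))
    rw [compl_Ioi, h, add_zero, measure_univ] at hcompl
    exact absurd hcompl h1.ne
  have hupp : μ (Ioi θ₀) ≠ 0 := h0.ne'
  -- main step
  apply antitone_nat_of_succ_le
  intro n
  set y₁ : ℝ := Y n p with hy₁
  set y₂ : ℝ := Y (n + 1) p with hy₂
  set Z₁ : ℝ := Z ν μ n y₁ with hZ₁
  set Z₂ : ℝ := Z ν μ (n + 1) y₂ with hZ₂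
  have hZ₁pos : 0 < Z₁ := hZpos n y₁
  have hZ₂pos : 0 < Z₂ := hZpos (n + 1) y₂
  set w₁ : ℝ → ℝ := fun u => rexp (u * y₁ - (n : ℝ) * cgf ν u) with hw₁
  set w₂ : ℝ → ℝ := fun u => rexp (u * y₂ - ((n + 1 : ℕ) : ℝ) * cgf ν u) with hw₂
  set J : Set ℝ := interior (expDom ν) with hJ
  set c : ℝ := Real.log (Z₂ / Z₁) with hc
  set φ : ℝ → ℝ := fun u => u * (y₂ - y₁) - cgf ν u with hφ
  set K : Set ℝ := {u ∈ J | c ≤ φ u} with hK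
  set D : ℝ → ℝ := fun u => Z₁ * w₂ u - Z₂ * w₁ u with hD
  -- w₂ = w₁ * exp φ
  have hw21 : ∀ u, w₂ u = w₁ u * rexp (φ u) := by
    intro u
    simp only [hw₁, hw₂, hφ, ← Real.exp_add]
    congr 1
    push_cast
    ring
  -- K is convex
  have hcgfJ : ConvexOn ℝ J (cgf ν) :=
    (convexOn_cgf ν).subset interior_subset (convex_expDom ν).interior
  have hφcon : ConcaveOn ℝ J φ := by
    refine ⟨(convex_expDom ν).interior, fun x hx z hz a b ha hb hab => ?_⟩
    have h := hcgfJ.2 hx hz ha hb hab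
    simp only [smul_eq_mul, hφ] at h ⊢
    have hexp : (a * x + b * z) * (y₂ - y₁) = a * (x * (y₂ - y₁)) + b * (z * (y₂ - y₁)) := by ring
    linarith
  have hKconv : Convex ℝ K := hφcon.convex_ge c
  -- sign of D
  have hpos : ∀ u ∈ J, u ∈ K → 0 ≤ D u := by
    intro u _ huK
    have hφu : c ≤ φ u := huK.2
    have h2 : Z₂ ≤ Z₁ * rexp (φ u) := by
      have : Z₂ = Z₁ * rexp c := by
        rw [hc, Real.exp_log (div_pos hZ₂pos hZ₁pos)]
        field_simp
      rw [this]
      exact mul_le_mul_of_nonneg_left (Real.exp_le_exp.2 hφu) hZ₁pos.le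
    rw [hD]
    simp only
    rw [hw21 u]
    nlinarith [(Real.exp_pos (u * y₁ - (n : ℝ) * cgf ν u)).le]
  have hneg : ∀ u ∈ J, u ∉ K → D u < 0 := by
    intro u huJ huK
    have hφu : φ u < c := by
      by_contra hcon
      exact huK ⟨huJ, not_lt.1 hcon⟩
    have h2 : Z₁ * rexp (φ u) < Z₂ := by
      have : Z₂ = Z₁ * rexp c := by
        rw [hc, Real.exp_log (div_pos hZ₂pos hZ₁pos)]
        field_simp
      rw [this]
      exact mul_lt_mul_of_pos_left (Real.exp_lt_exp.2 hφu) hZ₁pos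
    rw [hD]
    simp only
    rw [hw21 u]
    nlinarith [Real.exp_pos (u * y₁ - (n : ℝ) * cgf ν u)]
  -- integrability of D and friends
  have hw₁int : Integrable w₁ μ := hwint n y₁
  have hw₂int : Integrable w₂ μ := hwint (n + 1) y₂
  have hDint : Integrable D μ := (hw₂int.const_mul Z₁).sub (hw₁int.const_mul Z₂)
  have hDuint : Integrable (fun u => (u - θ₀) * D u) μ := by
    have : (fun u => (u - θ₀) * D u) =
        fun u => Z₁ * ((u - θ₀) * w₂ u) - Z₂ * ((u - θ₀) * w₁ u) := funext fun u => by
      rw [hD]; ring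
    rw [this]
    exact ((hsubint (n + 1) y₂).const_mul Z₁).sub ((hsubint n y₁).const_mul Z₂)
  have hDuint2 : Integrable (fun u => (θ₀ - u) * D u) μ := by
    have : (fun u => (θ₀ - u) * D u) =
        fun u => Z₁ * ((θ₀ - u) * w₂ u) - Z₂ * ((θ₀ - u) * w₁ u) := funext fun u => by
      rw [hD]; ring
    rw [this]
    exact ((hsubint2 (n + 1) y₂).const_mul Z₁).sub ((hsubint2 n y₁).const_mul Z₂)
  -- the two balance identities
  have hAn : ∫ u in Ioi θ₀, w₁ u ∂μ = p * Z₁ := hA n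
  have hAn1 : ∫ u in Ioi θ₀, w₂ u ∂μ = p * Z₂ := hA (n + 1)
  have hZw₁ : ∫ u, w₁ u ∂μ = Z₁ := rfl
  have hZw₂ : ∫ u, w₂ u ∂μ = Z₂ := rfl
  have hIoi0 : ∫ u in Ioi θ₀, D u ∂μ = 0 := by
    rw [hD]
    rw [integral_sub ((hw₂int.const_mul Z₁).integrableOn) ((hw₁int.const_mul Z₂).integrableOn),
      integral_const_mul, integral_const_mul, hAn, hAn1]
    ring
  have hIic0 : ∫ u in Iic θ₀, D u ∂μ = 0 := by
    have hsplit := integral_add_compl (measurableSet_Ioi : MeasurableSet (Ioi θ₀)) hDint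
    rw [compl_Ioi] at hsplit
    have hfull : ∫ u, D u ∂μ = 0 := by
      rw [hD, integral_sub (hw₂int.const_mul Z₁) (hw₁int.const_mul Z₂),
        integral_const_mul, integral_const_mul, hZw₁, hZw₂]
      ring
    rw [hIoi0] at hsplit
    linarith [hsplit, hfull]
  -- key inequalities
  have HU : ∫ u in Ioi θ₀, (u - θ₀) * D u ∂μ ≤ 0 :=
    key_upper hJae hKconv hpos hneg hDint hDuint hIoi0 hIic0 hlow
  have HL : ∫ u in Iic θ₀, (θ₀ - u) * D u ∂μ ≤ 0 :=
    key_lower hJae hKconv hpos hneg hDint hDuint2 hIoi0 hIic0 hupp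
  -- expand
  set T1p : ℝ := ∫ u in Ioi θ₀, (u - θ₀) * w₁ u ∂μ with hT1p
  set T2p : ℝ := ∫ u in Ioi θ₀, (u - θ₀) * w₂ u ∂μ with hT2p
  set T1m : ℝ := ∫ u in Iic θ₀, (θ₀ - u) * w₁ u ∂μ with hT1m
  set T2m : ℝ := ∫ u in Iic θ₀, (θ₀ - u) * w₂ u ∂μ with hT2m
  have HU' : Z₁ * T2p - Z₂ * T1p ≤ 0 := by
    have : ∫ u in Ioi θ₀, (u - θ₀) * D u ∂μ = Z₁ * T2p - Z₂ * T1p := by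
      have he : (fun u => (u - θ₀) * D u) =
          fun u => Z₁ * ((u - θ₀) * w₂ u) - Z₂ * ((u - θ₀) * w₁ u) := funext fun u => by
        rw [hD]; ring
      rw [he, integral_sub (((hsubint (n + 1) y₂).const_mul Z₁).integrableOn)
        (((hsubint n y₁).const_mul Z₂).integrableOn), integral_const_mul, integral_const_mul]
    linarith [this ▸ HU]
  have HL' : Z₁ * T2m - Z₂ * T1m ≤ 0 := by
    have : ∫ u in Iic θ₀, (θ₀ - u) * D u ∂μ = Z₁ * T2m - Z₂ * T1m := by
      have he : (fun u => (θ₀ - u) * D u) =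
          fun u => Z₁ * ((θ₀ - u) * w₂ u) - Z₂ * ((θ₀ - u) * w₁ u) := funext fun u => by
        rw [hD]; ring
      rw [he, integral_sub (((hsubint2 (n + 1) y₂).const_mul Z₁).integrableOn)
        (((hsubint2 n y₁).const_mul Z₂).integrableOn), integral_const_mul, integral_const_mul]
    linarith [this ▸ HL]
  -- expansions of the posterior integrals
  have eIoi : ∀ (m : ℕ) (y : ℝ),
      ∫ u in Ioi θ₀, rexp (u * y - (m : ℝ) * cgf ν u) * u ∂μ =
        (∫ u in Ioi θ₀, (u - θ₀) * rexp (u * y - (m : ℝ) * cgf ν u) ∂μ) +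
          θ₀ * ∫ u in Ioi θ₀, rexp (u * y - (m : ℝ) * cgf ν u) ∂μ := by
    intro m y
    have he : (fun u : ℝ => rexp (u * y - (m : ℝ) * cgf ν u) * u) =
        fun u => (u - θ₀) * rexp (u * y - (m : ℝ) * cgf ν u) +
          θ₀ * rexp (u * y - (m : ℝ) * cgf ν u) := funext fun u => by ring
    rw [he, integral_add ((hsubint m y).integrableOn) (((hwint m y).const_mul θ₀).integrableOn),
      integral_const_mul]
  have eIic : ∀ (m : ℕ) (y : ℝ),
      ∫ u in Iic θ₀, rexp (u * y - (m : ℝ) * cgf ν u) * u ∂μ =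
        -(∫ u in Iic θ₀, (θ₀ - u) * rexp (u * y - (m : ℝ) * cgf ν u) ∂μ) +
          θ₀ * ∫ u in Iic θ₀, rexp (u * y - (m : ℝ) * cgf ν u) ∂μ := by
    intro m y
    have he : (fun u : ℝ => rexp (u * y - (m : ℝ) * cgf ν u) * u) =
        fun u => θ₀ * rexp (u * y - (m : ℝ) * cgf ν u) -
          (θ₀ - u) * rexp (u * y - (m : ℝ) * cgf ν u) := funext fun u => by ring
    rw [he, integral_sub (((hwint m y).const_mul θ₀).integrableOn)
      ((hsubint2 m y).integrableOn), integral_const_mul]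
    ring
  have efull : ∀ (m : ℕ) (y : ℝ),
      ∫ u, rexp (u * y - (m : ℝ) * cgf ν u) * u ∂μ =
        (∫ u in Ioi θ₀, rexp (u * y - (m : ℝ) * cgf ν u) * u ∂μ) +
          ∫ u in Iic θ₀, rexp (u * y - (m : ℝ) * cgf ν u) * u ∂μ := by
    intro m y
    have h := integral_add_compl (measurableSet_Ioi : MeasurableSet (Ioi θ₀)) (huwint m y)
    rw [compl_Ioi] at h
    linarith
  have eZsplit : ∀ (m : ℕ) (y : ℝ),
      (∫ u in Ioi θ₀, rexp (u * y - (m : ℝ) * cgf ν u) ∂μ) +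
        (∫ u in Iic θ₀, rexp (u * y - (m : ℝ) * cgf ν u) ∂μ) = Z ν μ m y := by
    intro m y
    have h := integral_add_compl (measurableSet_Ioi : MeasurableSet (Ioi θ₀)) (hwint m y)
    rw [compl_Ioi] at h
    exact h
  -- rewrite the goal
  rw [hpostset (n + 1) y₂ (fun u => u) (Ioi θ₀) measurableSet_Ioi,
    hpostset n y₁ (fun u => u) (Ioi θ₀) measurableSet_Ioi,
    hpostfull (n + 1) y₂ (fun u => u), hpostfull n y₁ (fun u => u)]
  have E2 : ∫ u in Ioi θ₀, w₂ u * u ∂μ = T2p + θ₀ * (p * Z₂) := by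
    rw [hw₂, hT2p]; rw [eIoi (n + 1) y₂]
    rw [show (∫ u in Ioi θ₀, rexp (u * y₂ - ((n+1:ℕ) : ℝ) * cgf ν u) ∂μ) = p * Z₂ from hAn1]
  have E1 : ∫ u in Ioi θ₀, w₁ u * u ∂μ = T1p + θ₀ * (p * Z₁) := by
    rw [hw₁, hT1p]; rw [eIoi n y₁]
    rw [show (∫ u in Ioi θ₀, rexp (u * y₁ - (n : ℝ) * cgf ν u) ∂μ) = p * Z₁ from hAn]
  have C2 : ∫ u in Iic θ₀, w₂ u ∂μ = Z₂ - p * Z₂ := by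
    have := eZsplit (n + 1) y₂
    rw [show (∫ u in Ioi θ₀, rexp (u * y₂ - ((n+1:ℕ) : ℝ) * cgf ν u) ∂μ) = p * Z₂ from hAn1] at this
    linarith
  have C1 : ∫ u in Iic θ₀, w₁ u ∂μ = Z₁ - p * Z₁ := by
    have := eZsplit n y₁
    rw [show (∫ u in Ioi θ₀, rexp (u * y₁ - (n : ℝ) * cgf ν u) ∂μ) = p * Z₁ from hAn] at this
    linarith
  have F2 : ∫ u, w₂ u * u ∂μ = T2p + θ₀ * (p * Z₂) + (-T2m + θ₀ * (Z₂ - p * Z₂)) := by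
    rw [hw₂, efull (n + 1) y₂, eIic (n + 1) y₂]
    have := E2
    rw [hw₂] at this
    rw [this]
    rw [show (∫ u in Iic θ₀, rexp (u * y₂ - ((n+1:ℕ) : ℝ) * cgf ν u) ∂μ) = Z₂ - p * Z₂ from C2]
  have F1 : ∫ u, w₁ u * u ∂μ = T1p + θ₀ * (p * Z₁) + (-T1m + θ₀ * (Z₁ - p * Z₁)) := by
    rw [hw₁, efull n y₁, eIic n y₁]
    have := E1
    rw [hw₁] at this
    rw [this]
    rw [show (∫ u in Iic θ₀, rexp (u * y₁ - (n : ℝ) * cgf ν u) ∂μ) = Z₁ - p * Z₁ from C1]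
  rw [E2, E1, F2, F1, show Z ν μ (n + 1) y₂ = Z₂ from rfl, show Z ν μ n y₁ = Z₁ from rfl]
  have hgoal : ∀ Tp Tm Zi : ℝ, 0 < Zi →
      (Tp + θ₀ * (p * Zi)) / Zi - p * ((Tp + θ₀ * (p * Zi) + (-Tm + θ₀ * (Zi - p * Zi))) / Zi) =
        ((1 - p) * Tp + p * Tm) / Zi := by
    intro Tp Tm Zi hZi
    field_simp
    ring
  rw [hgoal T2p T2m Z₂ hZ₂pos, hgoal T1p T1m Z₁ hZ₁pos, div_le_div_iff₀ hZ₂pos hZ₁pos]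
  nlinarith [mul_le_mul_of_nonneg_left HU' (by linarith : (0:ℝ) ≤ 1 - p),
    mul_le_mul_of_nonneg_left HL' hp0.le]
end

section
/- Let θ₀ ∈ (0,1) and let ν₁, ν₂ be Borel probability measures on [0,1] with ν₁((θ₀,1]) = ν₂((θ₀,1]) = π ∈ (0,1), ν₂([0,a]) ≤ ν₁([0,a]) for all a ∈ [0,θ₀), and ν₂((b,1]) ≤ ν₁((b,1]) for all b ∈ (θ₀,1]. Then (∫_{(θ₀,1]} u dν₂(u)) / (∫_{[0,1]} u dν₂(u)) ≤ (∫_{(θ₀,1]} u dν₁(u)) / (∫_{[0,1]} u dν₁(u)) and (∫_{(θ₀,1]} (1−u) dν₂(u)) / (∫_{[0,1]} (1−u) dν₂(u)) ≥ (∫_{(θ₀,1]} (1−u) dν₁(u)) / (∫_{[0,1]} (1−u) dν₁(u)). -/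
open MeasureTheory Set

lemma layer_repr (ν : Measure ℝ) [IsFiniteMeasure ν]
    (s : Set ℝ) (hs : MeasurableSet s) (hsub : s ⊆ Set.Icc 0 1) :
    ∫ u in s, u ∂ν = (∫⁻ t in Set.Ioi (0:ℝ), ν (Set.Ioi t ∩ s)).toReal ∧
      (∫⁻ t in Set.Ioi (0:ℝ), ν (Set.Ioi t ∩ s)) ≠ ⊤ := by
  have hnn : 0 ≤ᵐ[ν.restrict s] fun u : ℝ => u :=
    (ae_restrict_iff' hs).2 (ae_of_all _ fun x hx => (hsub hx).1)
  have heq1 : (∫⁻ u, ENNReal.ofReal u ∂ν.restrict s) =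
      ∫⁻ t in Set.Ioi (0:ℝ), ν (Set.Ioi t ∩ s) := by
    rw [lintegral_eq_lintegral_meas_lt _ hnn aemeasurable_id]
    refine setLIntegral_congr_fun measurableSet_Ioi (fun t ht => ?_)
    rw [show {a : ℝ | t < a} = Set.Ioi t from rfl,
      Measure.restrict_apply measurableSet_Ioi]
  have hfin : (∫⁻ u, ENNReal.ofReal u ∂ν.restrict s) ≠ ⊤ := by
    have : (∫⁻ u, ENNReal.ofReal u ∂ν.restrict s) ≤ ∫⁻ _, 1 ∂ν.restrict s := by
      refine lintegral_mono_ae ((ae_restrict_iff' hs).2 (ae_of_all _ fun x hx => ?_))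
      exact ENNReal.ofReal_le_one.2 (hsub hx).2
    refine ne_top_of_le_ne_top ?_ this
    simp [lintegral_one]
  refine ⟨?_, heq1 ▸ hfin⟩
  rw [MeasureTheory.integral_eq_lintegral_of_nonneg_ae hnn
    aemeasurable_id.aestronglyMeasurable, heq1]

lemma layer_mono (ν₁ ν₂ : Measure ℝ) [IsFiniteMeasure ν₁] [IsFiniteMeasure ν₂]
    (s : Set ℝ) (hs : MeasurableSet s) (hsub : s ⊆ Set.Icc 0 1)
    (h : ∀ t, 0 < t → ν₂ (Set.Ioi t ∩ s) ≤ ν₁ (Set.Ioi t ∩ s)) :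
    ∫ u in s, u ∂ν₂ ≤ ∫ u in s, u ∂ν₁ := by
  obtain ⟨he2, hf2⟩ := layer_repr ν₂ s hs hsub
  obtain ⟨he1, hf1⟩ := layer_repr ν₁ s hs hsub
  rw [he1, he2]
  exact ENNReal.toReal_le_toReal hf2 hf1 |>.2
    (setLIntegral_mono' measurableSet_Ioi fun t ht => h t ht)

set_option maxHeartbeats 1000000 in
/-- Bernoulli key computation: if `ν₁, ν₂` are probability measures on `[0,1]`
with the same mass `p ∈ (0,1)` on `(θ₀,1]`, and `ν₂` is more concentrated
around `θ₀` than `ν₁` (tail inequalities), then the posterior probability of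
`(θ₀,1]` after observing a success is smaller under `ν₂` than under `ν₁`, and
after observing a failure it is larger under `ν₂` than under `ν₁`. -/
theorem bernoulli_update_concentration (θ₀ p : ℝ) (hθ : θ₀ ∈ Set.Ioo (0 : ℝ) 1)
    (ν₁ ν₂ : Measure ℝ) [IsProbabilityMeasure ν₁] [IsProbabilityMeasure ν₂]
    (hν₁ : ν₁ (Set.Icc (0 : ℝ) 1)ᶜ = 0) (hν₂ : ν₂ (Set.Icc (0 : ℝ) 1)ᶜ = 0)
    (hp : p ∈ Set.Ioo (0 : ℝ) 1)
    (hp₁ : (ν₁ (Set.Ioc θ₀ 1)).toReal = p) (hp₂ : (ν₂ (Set.Ioc θ₀ 1)).toReal = p)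
    (hlow : ∀ a, 0 ≤ a → a < θ₀ → ν₂ (Set.Icc 0 a) ≤ ν₁ (Set.Icc 0 a))
    (hhigh : ∀ b, θ₀ < b → b ≤ 1 → ν₂ (Set.Ioc b 1) ≤ ν₁ (Set.Ioc b 1)) :
    (∫ u in Set.Ioc θ₀ 1, u ∂ν₂) / (∫ u in Set.Icc (0 : ℝ) 1, u ∂ν₂) ≤
      (∫ u in Set.Ioc θ₀ 1, u ∂ν₁) / (∫ u in Set.Icc (0 : ℝ) 1, u ∂ν₁) ∧
    (∫ u in Set.Ioc θ₀ 1, (1 - u) ∂ν₁) / (∫ u in Set.Icc (0 : ℝ) 1, (1 - u) ∂ν₁) ≤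
      (∫ u in Set.Ioc θ₀ 1, (1 - u) ∂ν₂) / (∫ u in Set.Icc (0 : ℝ) 1, (1 - u) ∂ν₂) := by
  obtain ⟨hθ0, hθ1⟩ := hθ
  obtain ⟨hp0, hp1'⟩ := hp
  have hTm : MeasurableSet (Set.Ioc θ₀ 1) := measurableSet_Ioc
  have hSm : MeasurableSet (Set.Icc (0:ℝ) θ₀) := measurableSet_Icc
  have hTsub : Set.Ioc θ₀ 1 ⊆ Set.Icc (0:ℝ) 1 :=
    fun x hx => ⟨le_trans hθ0.le hx.1.le, hx.2⟩
  have hSsub : Set.Icc (0:ℝ) θ₀ ⊆ Set.Icc (0:ℝ) 1 :=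
    Set.Icc_subset_Icc_right hθ1.le
  have hdisj : Disjoint (Set.Icc (0:ℝ) θ₀) (Set.Ioc θ₀ 1) := by
    rw [Set.disjoint_left]; intro x hx hx'; exact absurd hx.2 (not_le.2 hx'.1)
  have hunion : Set.Icc (0:ℝ) θ₀ ∪ Set.Ioc θ₀ 1 = Set.Icc (0:ℝ) 1 :=
    Set.Icc_union_Ioc_eq_Icc hθ0.le hθ1.le
  -- total masses
  have htot₁ : ν₁ (Set.Icc (0:ℝ) 1) = 1 := (prob_compl_eq_zero_iff measurableSet_Icc).1 hν₁
  have htot₂ : ν₂ (Set.Icc (0:ℝ) 1) = 1 := (prob_compl_eq_zero_iff measurableSet_Icc).1 hν₂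
  have hpT₁ : ν₁ (Set.Ioc θ₀ 1) = ENNReal.ofReal p := by
    rw [← hp₁, ENNReal.ofReal_toReal (measure_ne_top _ _)]
  have hpT₂ : ν₂ (Set.Ioc θ₀ 1) = ENNReal.ofReal p := by
    rw [← hp₂, ENNReal.ofReal_toReal (measure_ne_top _ _)]
  have hsum₁ : ν₁ (Set.Icc (0:ℝ) θ₀) + ν₁ (Set.Ioc θ₀ 1) = 1 := by
    rw [← measure_union hdisj hTm, hunion, htot₁]
  have hsum₂ : ν₂ (Set.Icc (0:ℝ) θ₀) + ν₂ (Set.Ioc θ₀ 1) = 1 := by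
    rw [← measure_union hdisj hTm, hunion, htot₂]
  have hSeq : ν₁ (Set.Icc (0:ℝ) θ₀) = ν₂ (Set.Icc (0:ℝ) θ₀) := by
    have h1 := hsum₁; have h2 := hsum₂
    rw [hpT₁] at h1; rw [hpT₂] at h2
    exact (ENNReal.add_left_inj (by simp)).1 (h1.trans h2.symm)
  have hSr₁ : (ν₁ (Set.Icc (0:ℝ) θ₀)).toReal = 1 - p := by
    have := congrArg ENNReal.toReal hsum₁
    rw [ENNReal.toReal_add (measure_ne_top _ _) (measure_ne_top _ _), hp₁,
      ENNReal.toReal_one] at this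
    linarith
  have hSr₂ : (ν₂ (Set.Icc (0:ℝ) θ₀)).toReal = 1 - p := by
    have := congrArg ENNReal.toReal hsum₂
    rw [ENNReal.toReal_add (measure_ne_top _ _) (measure_ne_top _ _), hp₂,
      ENNReal.toReal_one] at this
    linarith
  -- integrability
  have hint : ∀ (ν : Measure ℝ) [IsFiniteMeasure ν] (f : ℝ → ℝ), Continuous f →
      ∀ s : Set ℝ, s ⊆ Set.Icc (0:ℝ) 1 → IntegrableOn f s ν := by
    intro ν _ f hf s hsub
    exact (hf.continuousOn.integrableOn_compact isCompact_Icc).mono_set hsub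
  have hcont1 : Continuous (fun u : ℝ => u) := continuous_id
  have hcont2 : Continuous (fun u : ℝ => 1 - u) := continuous_const.sub continuous_id
  -- A comparison
  have hA : ∫ u in Set.Ioc θ₀ 1, u ∂ν₂ ≤ ∫ u in Set.Ioc θ₀ 1, u ∂ν₁ := by
    refine layer_mono ν₁ ν₂ _ hTm hTsub fun t ht => ?_
    rw [Set.inter_comm, Set.Ioc_inter_Ioi]
    rcases le_or_gt t θ₀ with h1 | h1
    · rw [sup_eq_left.2 h1, hpT₁, hpT₂]
    · rw [sup_eq_right.2 h1.le]
      rcases le_or_gt t 1 with h2 | h2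
      · exact hhigh t h1 h2
      · rw [Set.Ioc_eq_empty (not_lt.2 h2.le)]; simp
  -- C comparison
  have hC : ∫ u in Set.Icc (0:ℝ) θ₀, u ∂ν₁ ≤ ∫ u in Set.Icc (0:ℝ) θ₀, u ∂ν₂ := by
    refine layer_mono ν₂ ν₁ _ hSm hSsub fun t ht => ?_
    have hset : Set.Ioi t ∩ Set.Icc (0:ℝ) θ₀ = Set.Ioc t θ₀ := by
      ext x
      simp only [Set.mem_inter_iff, Set.mem_Ioi, Set.mem_Icc, Set.mem_Ioc]
      constructor
      · rintro ⟨h1, _, h3⟩; exact ⟨h1, h3⟩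
      · rintro ⟨h1, h2⟩; exact ⟨h1, le_trans ht.le h1.le, h2⟩
    rw [hset]
    rcases lt_or_ge t θ₀ with h1 | h1
    · have hdiff : Set.Icc (0:ℝ) θ₀ \ Set.Icc 0 t = Set.Ioc t θ₀ := by
        ext x
        simp only [Set.mem_diff, Set.mem_Icc, Set.mem_Ioc, not_and, not_le]
        constructor
        · rintro ⟨⟨hx0, hxθ⟩, h⟩; exact ⟨h hx0, hxθ⟩
        · rintro ⟨hx1, hx2⟩
          exact ⟨⟨le_trans ht.le hx1.le, hx2⟩, fun _ => hx1⟩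
      have hm : ∀ (ν : Measure ℝ) [IsFiniteMeasure ν],
          ν (Set.Ioc t θ₀) = ν (Set.Icc (0:ℝ) θ₀) - ν (Set.Icc 0 t) := by
        intro ν _
        rw [← hdiff, measure_diff (Set.Icc_subset_Icc_right h1.le)
          measurableSet_Icc.nullMeasurableSet (measure_ne_top _ _)]
      rw [hm ν₁, hm ν₂, hSeq]
      exact tsub_le_tsub le_rfl (hlow t ht.le h1)
    · rw [Set.Ioc_eq_empty (not_lt.2 h1)]; simp
  -- lower bounds
  have hAlb : ∀ (ν : Measure ℝ) [IsProbabilityMeasure ν], (ν (Set.Ioc θ₀ 1)).toReal = p →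
      θ₀ * p ≤ ∫ u in Set.Ioc θ₀ 1, u ∂ν := by
    intro ν _ hpν
    have := setIntegral_mono_on (integrable_const θ₀).integrableOn
      (hint ν _ hcont1 _ hTsub) hTm (fun x hx => hx.1.le)
    rwa [setIntegral_const, measureReal_def, hpν, smul_eq_mul, mul_comm] at this
  have hA₁lb := hAlb ν₁ hp₁
  have hA₂lb := hAlb ν₂ hp₂
  have hC₁nn : 0 ≤ ∫ u in Set.Icc (0:ℝ) θ₀, u ∂ν₁ :=
    setIntegral_nonneg hSm fun x hx => hx.1
  have hC₂nn : 0 ≤ ∫ u in Set.Icc (0:ℝ) θ₀, u ∂ν₂ :=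
    setIntegral_nonneg hSm fun x hx => hx.1
  have hFlb : ∀ (ν : Measure ℝ) [IsProbabilityMeasure ν], (ν (Set.Icc (0:ℝ) θ₀)).toReal = 1 - p →
      (1 - θ₀) * (1 - p) ≤ ∫ u in Set.Icc (0:ℝ) θ₀, (1 - u) ∂ν := by
    intro ν _ hν
    have := setIntegral_mono_on (integrable_const (1 - θ₀)).integrableOn
      (hint ν _ hcont2 _ hSsub) hSm (fun x hx => sub_le_sub_left hx.2 1)
    rwa [setIntegral_const, measureReal_def, hν, smul_eq_mul, mul_comm] at this
  have hF₁lb := hFlb ν₁ hSr₁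
  have hF₂lb := hFlb ν₂ hSr₂
  have hD₁nn : 0 ≤ ∫ u in Set.Ioc θ₀ 1, (1 - u) ∂ν₁ :=
    setIntegral_nonneg hTm fun x hx => by linarith [hx.2]
  have hD₂nn : 0 ≤ ∫ u in Set.Ioc θ₀ 1, (1 - u) ∂ν₂ :=
    setIntegral_nonneg hTm fun x hx => by linarith [hx.2]
  -- splits
  have hsplit : ∀ (ν : Measure ℝ) [IsFiniteMeasure ν] (f : ℝ → ℝ), Continuous f →
      ∫ u in Set.Icc (0:ℝ) 1, f u ∂ν =
        (∫ u in Set.Icc (0:ℝ) θ₀, f u ∂ν) + ∫ u in Set.Ioc θ₀ 1, f u ∂ν := by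
    intro ν _ f hf
    rw [← hunion, setIntegral_union hdisj hTm (hint ν f hf _ hSsub) (hint ν f hf _ hTsub)]
  -- (1-u) identities
  have hDT : ∀ (ν : Measure ℝ) [IsProbabilityMeasure ν], (ν (Set.Ioc θ₀ 1)).toReal = p →
      ∫ u in Set.Ioc θ₀ 1, (1 - u) ∂ν = p - ∫ u in Set.Ioc θ₀ 1, u ∂ν := by
    intro ν _ hpν
    rw [integral_sub (integrable_const 1) (hint ν _ hcont1 _ hTsub), integral_const,
      measureReal_def, Measure.restrict_apply_univ, hpν, smul_eq_mul, mul_one]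
  have hDS : ∀ (ν : Measure ℝ) [IsProbabilityMeasure ν], (ν (Set.Icc (0:ℝ) θ₀)).toReal = 1 - p →
      ∫ u in Set.Icc (0:ℝ) θ₀, (1 - u) ∂ν = (1 - p) - ∫ u in Set.Icc (0:ℝ) θ₀, u ∂ν := by
    intro ν _ hν
    rw [integral_sub (integrable_const 1) (hint ν _ hcont1 _ hSsub), integral_const,
      measureReal_def, Measure.restrict_apply_univ, hν, smul_eq_mul, mul_one]
  have hDT₁ := hDT ν₁ hp₁
  have hDT₂ := hDT ν₂ hp₂
  have hDS₁ := hDS ν₁ hSr₁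
  have hDS₂ := hDS ν₂ hSr₂
  -- abbreviations
  set a₁ := ∫ u in Set.Ioc θ₀ 1, u ∂ν₁ with ha₁
  set a₂ := ∫ u in Set.Ioc θ₀ 1, u ∂ν₂ with ha₂
  set c₁ := ∫ u in Set.Icc (0:ℝ) θ₀, u ∂ν₁ with hc₁
  set c₂ := ∫ u in Set.Icc (0:ℝ) θ₀, u ∂ν₂ with hc₂
  have hθp : 0 < θ₀ * p := mul_pos hθ0 hp0
  have hfp : 0 < (1 - θ₀) * (1 - p) := mul_pos (by linarith) (by linarith)
  constructor
  · rw [hsplit ν₁ _ hcont1, hsplit ν₂ _ hcont1]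
    rw [div_le_div_iff₀ (by linarith) (by linarith)]
    nlinarith [mul_le_mul hA hC hC₁nn (by linarith : (0:ℝ) ≤ a₁)]
  · rw [hsplit ν₁ _ hcont2, hsplit ν₂ _ hcont2, hDT₁, hDT₂, hDS₁, hDS₂]
    rw [div_le_div_iff₀ (by nlinarith [hF₁lb, hDS₁, hDT₁, hD₁nn])
      (by nlinarith [hF₂lb, hDS₂, hDT₂, hD₂nn])]
    have hd₁ : 0 ≤ p - a₁ := by linarith [hD₁nn, hDT₁]
    have hd₂ : 0 ≤ p - a₂ := by linarith [hD₂nn, hDT₂]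
    nlinarith [mul_le_mul (by linarith : p - a₁ ≤ p - a₂)
      (by linarith : (1 - p) - c₂ ≤ (1 - p) - c₁) (by linarith) hd₂]
end

section
/- Let θ₀ ∈ (0,1) and let ν₁, ν₂ be Borel probability measures on [0,1] with ν₁((θ₀,1]) = ν₂((θ₀,1]) = π ∈ (0,1), ν₂([0,a]) ≤ ν₁([0,a]) for all a ∈ [0,θ₀), and ν₂((b,1]) ≤ ν₁((b,1]) for all b ∈ (θ₀,1]. For i = 1,2 set M_i := ∫_{[0,1]} u dν_i(u), A_i := (∫_{(θ₀,1]} u dν_i(u)) / M_i, and B_i := (∫_{(θ₀,1]} (1−u) dν_i(u)) / (∫_{[0,1]} (1−u) dν_i(u)). Then for every concave function f : [0,1] → ℝ, M₁ f(A₁) + (1−M₁) f(B₁) ≤ M₂ f(A₂) + (1−M₂) f(B₂). -/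
open MeasureTheory Set

section Helpers
variable {ν : Measure ℝ}

lemma ae_mem_Icc01 (hν : ν (Set.Icc (0:ℝ) 1)ᶜ = 0) : ∀ᵐ u ∂ν, u ∈ Set.Icc (0:ℝ) 1 := by
  rw [MeasureTheory.ae_iff]
  exact hν

lemma intOn_id [IsFiniteMeasure ν] (hν : ν (Set.Icc (0:ℝ) 1)ᶜ = 0) (s : Set ℝ) :
    IntegrableOn (fun u : ℝ => u) s ν := by
  refine Integrable.mono' (integrable_const (1:ℝ)) measurable_id.aestronglyMeasurable ?_
  refine ae_restrict_of_ae ?_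
  filter_upwards [ae_mem_Icc01 hν] with u hu
  rw [Real.norm_eq_abs]
  exact abs_le.2 ⟨by linarith [hu.1], hu.2⟩

lemma intOn_one_sub [IsFiniteMeasure ν] (hν : ν (Set.Icc (0:ℝ) 1)ᶜ = 0) (s : Set ℝ) :
    IntegrableOn (fun u : ℝ => 1 - u) s ν :=
  (integrable_const (1:ℝ)).integrableOn.sub (intOn_id hν s)

lemma meas_Icc01 [IsProbabilityMeasure ν] (hν : ν (Set.Icc (0:ℝ) 1)ᶜ = 0) :
    ν (Set.Icc (0:ℝ) 1) = 1 := by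
  have := measure_add_measure_compl (μ := ν) (measurableSet_Icc (a := (0:ℝ)) (b := 1))
  rw [hν, add_zero] at this
  simpa using this

lemma meas_split {θ₀ : ℝ} (h0 : (0:ℝ) ≤ θ₀) (h1 : θ₀ ≤ 1) [IsProbabilityMeasure ν]
    (hν : ν (Set.Icc (0:ℝ) 1)ᶜ = 0) :
    ν (Set.Icc 0 θ₀) + ν (Set.Ioc θ₀ 1) = 1 := by
  rw [← measure_union (Set.disjoint_left.2 fun x hx hx' => absurd hx'.1 hx.2.not_gt)
    measurableSet_Ioc, Set.Icc_union_Ioc_eq_Icc h0 h1, meas_Icc01 hν]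

end Helpers

section Core
variable {ν ν₁ ν₂ : Measure ℝ}

-- layer cake rewrite for a set `s ⊆ [0,∞)`-ish
lemma layer_eq (ν : Measure ℝ) [IsFiniteMeasure ν] {s : Set ℝ} (hs : MeasurableSet s)
    (hpos : ∀ x ∈ s, (0:ℝ) ≤ x) :
    ∫⁻ u in s, ENNReal.ofReal u ∂ν = ∫⁻ t in Set.Ioi (0:ℝ), ν (s ∩ Set.Ioi t) := by
  have hnn : 0 ≤ᵐ[ν.restrict s] (fun u : ℝ => u) :=
    (ae_restrict_mem hs).mono fun u hu => hpos u hu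
  have h := lintegral_eq_lintegral_meas_lt (ν.restrict s) hnn measurable_id.aemeasurable
  rw [h]
  refine lintegral_congr fun t => ?_
  rw [show {a : ℝ | t < a} = Set.Ioi t from rfl,
    Measure.restrict_apply measurableSet_Ioi, Set.inter_comm]

lemma tail_lint_mono {θ₀ p : ℝ} (hθ : θ₀ ∈ Set.Ioo (0:ℝ) 1)
    [IsProbabilityMeasure ν₁] [IsProbabilityMeasure ν₂]
    (hp₁ : (ν₁ (Set.Ioc θ₀ 1)).toReal = p) (hp₂ : (ν₂ (Set.Ioc θ₀ 1)).toReal = p)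
    (hhigh : ∀ b, θ₀ < b → b ≤ 1 → ν₂ (Set.Ioc b 1) ≤ ν₁ (Set.Ioc b 1)) :
    ∫⁻ u in Set.Ioc θ₀ 1, ENNReal.ofReal u ∂ν₂ ≤ ∫⁻ u in Set.Ioc θ₀ 1, ENNReal.ofReal u ∂ν₁ := by
  have hpos : ∀ x ∈ Set.Ioc θ₀ 1, (0:ℝ) ≤ x := fun x hx => (hθ.1.trans hx.1).le
  rw [layer_eq ν₁ measurableSet_Ioc hpos, layer_eq ν₂ measurableSet_Ioc hpos]
  have hmeas : Measurable fun t : ℝ => ν₁ (Set.Ioc θ₀ 1 ∩ Set.Ioi t) := by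
    apply Antitone.measurable
    intro t t' h
    exact measure_mono (Set.inter_subset_inter_right _ (Set.Ioi_subset_Ioi h))
  refine setLIntegral_mono hmeas fun t ht => ?_
  rw [Set.Ioc_inter_Ioi]
  rcases le_or_gt t θ₀ with h | h
  · rw [sup_eq_left.2 h]
    have e₁ : ν₁ (Set.Ioc θ₀ 1) = ENNReal.ofReal p := by
      rw [← hp₁, ENNReal.ofReal_toReal (measure_ne_top _ _)]
    have e₂ : ν₂ (Set.Ioc θ₀ 1) = ENNReal.ofReal p := by
      rw [← hp₂, ENNReal.ofReal_toReal (measure_ne_top _ _)]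
    rw [e₁, e₂]
  · rw [sup_eq_right.2 h.le]
    rcases le_or_gt t 1 with h1 | h1
    · exact hhigh t h h1
    · rw [Set.Ioc_eq_empty (by exact fun hc => absurd hc (not_lt.2 h1.le))]
      simp

lemma low_lint_mono {θ₀ p : ℝ} (hθ : θ₀ ∈ Set.Ioo (0:ℝ) 1) (hp : p ∈ Set.Ioo (0:ℝ) 1)
    [IsProbabilityMeasure ν₁] [IsProbabilityMeasure ν₂]
    (hν₁ : ν₁ (Set.Icc (0:ℝ) 1)ᶜ = 0) (hν₂ : ν₂ (Set.Icc (0:ℝ) 1)ᶜ = 0)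
    (hp₁ : (ν₁ (Set.Ioc θ₀ 1)).toReal = p) (hp₂ : (ν₂ (Set.Ioc θ₀ 1)).toReal = p)
    (hlow : ∀ a, 0 ≤ a → a < θ₀ → ν₂ (Set.Icc 0 a) ≤ ν₁ (Set.Icc 0 a)) :
    ∫⁻ u in Set.Icc 0 θ₀, ENNReal.ofReal u ∂ν₁ ≤ ∫⁻ u in Set.Icc 0 θ₀, ENNReal.ofReal u ∂ν₂ := by
  -- equal masses on [0,θ₀]
  have hIcc : ν₁ (Set.Icc 0 θ₀) = ν₂ (Set.Icc 0 θ₀) := by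
    have e₁ : ν₁ (Set.Ioc θ₀ 1) = ENNReal.ofReal p := by
      rw [← hp₁, ENNReal.ofReal_toReal (measure_ne_top _ _)]
    have e₂ : ν₂ (Set.Ioc θ₀ 1) = ENNReal.ofReal p := by
      rw [← hp₂, ENNReal.ofReal_toReal (measure_ne_top _ _)]
    have s₁ := meas_split hθ.1.le hθ.2.le hν₁
    have s₂ := meas_split hθ.1.le hθ.2.le hν₂
    rw [e₁] at s₁; rw [e₂] at s₂
    have := s₁.trans s₂.symm
    exact (ENNReal.add_left_inj (by simp)).1 this
  have hpos : ∀ x ∈ Set.Icc (0:ℝ) θ₀, (0:ℝ) ≤ x := fun x hx => hx.1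
  rw [layer_eq ν₁ measurableSet_Icc hpos, layer_eq ν₂ measurableSet_Icc hpos]
  have hmeas : Measurable fun t : ℝ => ν₂ (Set.Icc 0 θ₀ ∩ Set.Ioi t) := by
    apply Antitone.measurable
    intro t t' h
    exact measure_mono (Set.inter_subset_inter_right _ (Set.Ioi_subset_Ioi h))
  refine setLIntegral_mono hmeas fun t ht => ?_
  have ht0 : (0:ℝ) < t := ht
  have hset : ∀ (c : ℝ), Set.Icc (0:ℝ) θ₀ ∩ Set.Ioi t = Set.Ioc t θ₀ := by
    intro c; ext x
    simp only [Set.mem_inter_iff, Set.mem_Icc, Set.mem_Ioi, Set.mem_Ioc]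
    constructor
    · rintro ⟨⟨_, h2⟩, h3⟩; exact ⟨h3, h2⟩
    · rintro ⟨h1, h2⟩; exact ⟨⟨le_of_lt (ht0.trans h1), h2⟩, h1⟩
  rw [hset 0]
  rcases le_or_gt θ₀ t with h | h
  · rw [Set.Ioc_eq_empty (not_lt.2 h)]; simp
  · have hdiff : Set.Icc (0:ℝ) θ₀ \ Set.Icc 0 t = Set.Ioc t θ₀ := by
      ext x
      simp only [Set.mem_diff, Set.mem_Icc, Set.mem_Ioc, not_and, not_le]
      constructor
      · rintro ⟨⟨h1, h2⟩, h3⟩; exact ⟨h3 h1, h2⟩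
      · rintro ⟨h1, h2⟩; exact ⟨⟨le_of_lt (ht0.trans h1), h2⟩, fun _ => h1⟩
    have hd : ∀ (μ : Measure ℝ) [IsProbabilityMeasure μ],
        μ (Set.Ioc t θ₀) = μ (Set.Icc 0 θ₀) - μ (Set.Icc 0 t) := by
      intro μ _
      rw [← hdiff]
      exact measure_diff (Set.Icc_subset_Icc le_rfl h.le) measurableSet_Icc.nullMeasurableSet
        (measure_ne_top _ _)
    rw [hd ν₁, hd ν₂, hIcc]
    exact tsub_le_tsub le_rfl (hlow t ht0.le h)

end Core
section Real
variable {ν ν₁ ν₂ : Measure ℝ}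

lemma set_int_eq_lint (ν : Measure ℝ) [IsFiniteMeasure ν] {s : Set ℝ} (hs : MeasurableSet s)
    (hpos : ∀ x ∈ s, (0:ℝ) ≤ x) :
    ∫ u in s, u ∂ν = (∫⁻ u in s, ENNReal.ofReal u ∂ν).toReal := by
  rw [integral_eq_lintegral_of_nonneg_ae
    ((ae_restrict_mem hs).mono fun u hu => hpos u hu)
    measurable_id.aestronglyMeasurable]

lemma lint_ne_top (ν : Measure ℝ) [IsFiniteMeasure ν] {s : Set ℝ}
    (hb : ∀ x ∈ s, x ≤ (1:ℝ)) :
    ∫⁻ u in s, ENNReal.ofReal u ∂ν ≠ ⊤ := by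
  have : ∫⁻ u in s, ENNReal.ofReal u ∂ν ≤ ∫⁻ _ in s, (1:ENNReal) ∂ν :=
    setLIntegral_mono measurable_const fun x hx => ENNReal.ofReal_le_one.2 (hb x hx)
  rw [setLIntegral_const] at this
  exact ne_top_of_le_ne_top (by simp [measure_ne_top]) this

lemma tail_mono {θ₀ p : ℝ} (hθ : θ₀ ∈ Set.Ioo (0:ℝ) 1)
    [IsProbabilityMeasure ν₁] [IsProbabilityMeasure ν₂]
    (hp₁ : (ν₁ (Set.Ioc θ₀ 1)).toReal = p) (hp₂ : (ν₂ (Set.Ioc θ₀ 1)).toReal = p)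
    (hhigh : ∀ b, θ₀ < b → b ≤ 1 → ν₂ (Set.Ioc b 1) ≤ ν₁ (Set.Ioc b 1)) :
    ∫ u in Set.Ioc θ₀ 1, u ∂ν₂ ≤ ∫ u in Set.Ioc θ₀ 1, u ∂ν₁ := by
  rw [set_int_eq_lint ν₁ measurableSet_Ioc (fun x hx => (hθ.1.trans hx.1).le),
    set_int_eq_lint ν₂ measurableSet_Ioc (fun x hx => (hθ.1.trans hx.1).le)]
  exact ENNReal.toReal_mono (lint_ne_top ν₁ fun x hx => hx.2)
    (tail_lint_mono hθ hp₁ hp₂ hhigh)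

lemma low_mono {θ₀ p : ℝ} (hθ : θ₀ ∈ Set.Ioo (0:ℝ) 1) (hp : p ∈ Set.Ioo (0:ℝ) 1)
    [IsProbabilityMeasure ν₁] [IsProbabilityMeasure ν₂]
    (hν₁ : ν₁ (Set.Icc (0:ℝ) 1)ᶜ = 0) (hν₂ : ν₂ (Set.Icc (0:ℝ) 1)ᶜ = 0)
    (hp₁ : (ν₁ (Set.Ioc θ₀ 1)).toReal = p) (hp₂ : (ν₂ (Set.Ioc θ₀ 1)).toReal = p)
    (hlow : ∀ a, 0 ≤ a → a < θ₀ → ν₂ (Set.Icc 0 a) ≤ ν₁ (Set.Icc 0 a)) :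
    ∫ u in Set.Icc 0 θ₀, u ∂ν₁ ≤ ∫ u in Set.Icc 0 θ₀, u ∂ν₂ := by
  rw [set_int_eq_lint ν₁ measurableSet_Icc (fun x hx => hx.1),
    set_int_eq_lint ν₂ measurableSet_Icc (fun x hx => hx.1)]
  exact ENNReal.toReal_mono (lint_ne_top ν₂ fun x hx => hx.2.trans hθ.2.le)
    (low_lint_mono hθ hp hν₁ hν₂ hp₁ hp₂ hlow)

end Real

/-- Chord inequality for a concave function. -/
lemma concave_chord {f : ℝ → ℝ} (hf : ConcaveOn ℝ (Set.Icc 0 1) f) {a b x : ℝ}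
    (h0 : 0 ≤ b) (hba : b < a) (ha : a ≤ 1) (hx1 : b ≤ x) (hx2 : x ≤ a) :
    (x - b) * f a + (a - x) * f b ≤ (a - b) * f x := by
  have hd : (0:ℝ) < a - b := by linarith
  have t0 : 0 ≤ (x - b) / (a - b) := div_nonneg (by linarith) hd.le
  have t1 : (x - b) / (a - b) ≤ 1 := (div_le_one hd).2 (by linarith)
  have key := hf.2 (x := a) (y := b) ⟨by linarith, ha⟩ ⟨h0, by linarith⟩ t0
    (by linarith : (0:ℝ) ≤ 1 - (x - b) / (a - b)) (by ring)
  rw [smul_eq_mul, smul_eq_mul, smul_eq_mul, smul_eq_mul] at key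
  have harg : (x - b) / (a - b) * a + (1 - (x - b) / (a - b)) * b = x := by
    field_simp
    ring
  rw [harg] at key
  have goal' := mul_le_mul_of_nonneg_left key hd.le
  calc (x - b) * f a + (a - x) * f b
      = (a - b) * ((x - b) / (a - b) * f a + (1 - (x - b) / (a - b)) * f b) := by
        field_simp
        ring
    _ ≤ (a - b) * f x := goal'

/-- Two-point distributions with the same mean compare in convex order
when one pair of points is nested inside the other. -/
lemma two_point_convex (f : ℝ → ℝ) (hf : ConcaveOn ℝ (Set.Icc 0 1) f)
    (a₁ b₁ a₂ b₂ m₁ m₂ : ℝ)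
    (hb₁ : 0 ≤ b₁) (hbb : b₁ ≤ b₂) (hba : b₂ ≤ a₂) (haa : a₂ ≤ a₁) (ha₁ : a₁ ≤ 1)
    (hm₁0 : 0 ≤ m₁) (hm₁1 : m₁ ≤ 1) (hm₂0 : 0 ≤ m₂) (hm₂1 : m₂ ≤ 1)
    (hmean : m₁ * a₁ + (1 - m₁) * b₁ = m₂ * a₂ + (1 - m₂) * b₂) :
    m₁ * f a₁ + (1 - m₁) * f b₁ ≤ m₂ * f a₂ + (1 - m₂) * f b₂ := by
  rcases eq_or_lt_of_le (hbb.trans (hba.trans haa)) with heq | hlt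
  · -- degenerate case : all four points coincide
    have e1 : b₂ = b₁ := le_antisymm (by linarith) hbb
    have e2 : a₂ = b₁ := le_antisymm (by linarith) (by linarith)
    rw [e1, e2, ← heq]
    linarith
  · have C1 : (a₂ - b₁) * f a₁ + (a₁ - a₂) * f b₁ ≤ (a₁ - b₁) * f a₂ :=
      concave_chord hf hb₁ hlt ha₁ (hbb.trans hba) haa
    have C2 : (b₂ - b₁) * f a₁ + (a₁ - b₂) * f b₁ ≤ (a₁ - b₁) * f b₂ :=
      concave_chord hf hb₁ hlt ha₁ hbb (by linarith)
    have P1 := mul_le_mul_of_nonneg_left C1 hm₂0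
    have P2 := mul_le_mul_of_nonneg_left C2 (by linarith : (0:ℝ) ≤ 1 - m₂)
    have e1 : (a₁ - b₁) * m₁ = m₂ * a₂ + (1 - m₂) * b₂ - b₁ := by linear_combination hmean
    have e2 : (a₁ - b₁) * (1 - m₁) = a₁ - (m₂ * a₂ + (1 - m₂) * b₂) := by
      linear_combination (-1 : ℝ) * hmean
    have e1' : (a₁ - b₁) * m₁ * f a₁ = (m₂ * a₂ + (1 - m₂) * b₂ - b₁) * f a₁ := by rw [e1]
    have e2' : (a₁ - b₁) * (1 - m₁) * f b₁ = (a₁ - (m₂ * a₂ + (1 - m₂) * b₂)) * f b₁ := by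
      rw [e2]
    have h : (a₁ - b₁) * (m₁ * f a₁ + (1 - m₁) * f b₁)
        ≤ (a₁ - b₁) * (m₂ * f a₂ + (1 - m₂) * f b₂) := by nlinarith [P1, P2, e1', e2']
    exact le_of_mul_le_mul_left h (by linarith)
lemma measure_facts (ν : Measure ℝ) [IsProbabilityMeasure ν]
    (hν : ν (Set.Icc (0:ℝ) 1)ᶜ = 0) {θ₀ p : ℝ}
    (hθ : θ₀ ∈ Set.Ioo (0:ℝ) 1) (hp : p ∈ Set.Ioo (0:ℝ) 1)
    (hpν : (ν (Set.Ioc θ₀ 1)).toReal = p) :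
    (∫ u in Set.Icc (0:ℝ) 1, u ∂ν)
        = (∫ u in Set.Icc 0 θ₀, u ∂ν) + (∫ u in Set.Ioc θ₀ 1, u ∂ν)
    ∧ (∫ u in Set.Ioc θ₀ 1, (1 - u) ∂ν) = p - (∫ u in Set.Ioc θ₀ 1, u ∂ν)
    ∧ (∫ u in Set.Icc (0:ℝ) 1, (1 - u) ∂ν) = 1 - (∫ u in Set.Icc (0:ℝ) 1, u ∂ν)
    ∧ θ₀ * p ≤ (∫ u in Set.Ioc θ₀ 1, u ∂ν)
    ∧ (∫ u in Set.Ioc θ₀ 1, u ∂ν) ≤ p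
    ∧ 0 ≤ (∫ u in Set.Icc 0 θ₀, u ∂ν)
    ∧ (∫ u in Set.Icc 0 θ₀, u ∂ν) ≤ θ₀ * (1 - p) := by
  have hdisj : Disjoint (Set.Icc (0:ℝ) θ₀) (Set.Ioc θ₀ 1) :=
    Set.disjoint_left.2 fun x hx hx' => absurd hx'.1 hx.2.not_gt
  have hIoc : (ν (Set.Ioc θ₀ 1)).toReal = p := hpν
  have hIcc01 : (ν (Set.Icc (0:ℝ) 1)).toReal = 1 := by rw [meas_Icc01 hν]; simp
  have hIccθ : (ν (Set.Icc (0:ℝ) θ₀)).toReal = 1 - p := by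
    have h := meas_split hθ.1.le hθ.2.le hν
    have := congrArg ENNReal.toReal h
    rw [ENNReal.toReal_add (measure_ne_top _ _) (measure_ne_top _ _)] at this
    rw [hIoc] at this
    simp at this
    linarith
  refine ⟨?_, ?_, ?_, ?_, ?_, ?_, ?_⟩
  · rw [← Set.Icc_union_Ioc_eq_Icc hθ.1.le hθ.2.le,
      setIntegral_union hdisj measurableSet_Ioc (intOn_id hν _) (intOn_id hν _)]
  · rw [integral_sub (integrable_const 1).integrableOn (intOn_id hν _),
      setIntegral_const, measureReal_def, hIoc, smul_eq_mul, mul_one]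
  · rw [integral_sub (integrable_const 1).integrableOn (intOn_id hν _),
      setIntegral_const, measureReal_def, hIcc01, smul_eq_mul, mul_one]
  · have := setIntegral_mono_on (s := Set.Ioc θ₀ 1) ((integrable_const θ₀).integrableOn)
      (intOn_id hν _) measurableSet_Ioc (fun x hx => hx.1.le)
    rwa [setIntegral_const, measureReal_def, hIoc, smul_eq_mul, mul_comm] at this
  · have := setIntegral_mono_on (s := Set.Ioc θ₀ 1) (intOn_id hν _)
      ((integrable_const (1:ℝ)).integrableOn) measurableSet_Ioc (fun x hx => hx.2)
    rwa [setIntegral_const, measureReal_def, hIoc, smul_eq_mul, mul_one] at this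
  · exact setIntegral_nonneg measurableSet_Icc fun x hx => hx.1
  · have := setIntegral_mono_on (s := Set.Icc 0 θ₀) (intOn_id hν _)
      ((integrable_const θ₀).integrableOn) measurableSet_Icc (fun x hx => hx.2)
    rwa [setIntegral_const, measureReal_def, hIccθ, smul_eq_mul, mul_comm] at this
/-- Convex-order statement for Bernoulli observations: with `M_i = ∫ u dν_i`,
`A_i` the updated mass of `(θ₀,1]` after a success and `B_i` after a failure,
if `ν₂` is at least as concentrated around `θ₀` as `ν₁` with the same mass `p`
above `θ₀`, then for every concave `f : [0,1] → ℝ`,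
`M₁ f(A₁) + (1-M₁) f(B₁) ≤ M₂ f(A₂) + (1-M₂) f(B₂)`. -/
theorem bernoulli_convex_order (θ₀ p : ℝ) (hθ : θ₀ ∈ Set.Ioo (0 : ℝ) 1)
    (ν₁ ν₂ : Measure ℝ) [IsProbabilityMeasure ν₁] [IsProbabilityMeasure ν₂]
    (hν₁ : ν₁ (Set.Icc (0 : ℝ) 1)ᶜ = 0) (hν₂ : ν₂ (Set.Icc (0 : ℝ) 1)ᶜ = 0)
    (hp : p ∈ Set.Ioo (0 : ℝ) 1)
    (hp₁ : (ν₁ (Set.Ioc θ₀ 1)).toReal = p) (hp₂ : (ν₂ (Set.Ioc θ₀ 1)).toReal = p)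
    (hlow : ∀ a, 0 ≤ a → a < θ₀ → ν₂ (Set.Icc 0 a) ≤ ν₁ (Set.Icc 0 a))
    (hhigh : ∀ b, θ₀ < b → b ≤ 1 → ν₂ (Set.Ioc b 1) ≤ ν₁ (Set.Ioc b 1))
    (M₁ M₂ A₁ A₂ B₁ B₂ : ℝ)
    (hM₁ : M₁ = ∫ u in Set.Icc (0 : ℝ) 1, u ∂ν₁)
    (hM₂ : M₂ = ∫ u in Set.Icc (0 : ℝ) 1, u ∂ν₂)
    (hA₁ : A₁ = (∫ u in Set.Ioc θ₀ 1, u ∂ν₁) / M₁)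
    (hA₂ : A₂ = (∫ u in Set.Ioc θ₀ 1, u ∂ν₂) / M₂)
    (hB₁ : B₁ = (∫ u in Set.Ioc θ₀ 1, (1 - u) ∂ν₁) /
      (∫ u in Set.Icc (0 : ℝ) 1, (1 - u) ∂ν₁))
    (hB₂ : B₂ = (∫ u in Set.Ioc θ₀ 1, (1 - u) ∂ν₂) /
      (∫ u in Set.Icc (0 : ℝ) 1, (1 - u) ∂ν₂))
    (f : ℝ → ℝ) (hf : ConcaveOn ℝ (Set.Icc 0 1) f) :
    M₁ * f A₁ + (1 - M₁) * f B₁ ≤ M₂ * f A₂ + (1 - M₂) * f B₂ := by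
  obtain ⟨hθ0, hθ1⟩ := hθ
  obtain ⟨hp0, hp1⟩ := hp
  obtain ⟨split₁, one_sub_Ioc₁, one_sub_Icc₁, hS₁lb, hS₁ub, hL₁lb, hL₁ub⟩ :=
    measure_facts ν₁ hν₁ ⟨hθ0, hθ1⟩ ⟨hp0, hp1⟩ hp₁
  obtain ⟨split₂, one_sub_Ioc₂, one_sub_Icc₂, hS₂lb, hS₂ub, hL₂lb, hL₂ub⟩ :=
    measure_facts ν₂ hν₂ ⟨hθ0, hθ1⟩ ⟨hp0, hp1⟩ hp₂
  set S₁ : ℝ := ∫ u in Set.Ioc θ₀ 1, u ∂ν₁ with hS₁def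
  set S₂ : ℝ := ∫ u in Set.Ioc θ₀ 1, u ∂ν₂ with hS₂def
  set L₁ : ℝ := ∫ u in Set.Icc (0:ℝ) θ₀, u ∂ν₁ with hL₁def
  set L₂ : ℝ := ∫ u in Set.Icc (0:ℝ) θ₀, u ∂ν₂ with hL₂def
  -- the two monotonicity facts
  have hS : S₂ ≤ S₁ := tail_mono ⟨hθ0, hθ1⟩ hp₁ hp₂ hhigh
  have hL : L₁ ≤ L₂ := low_mono ⟨hθ0, hθ1⟩ ⟨hp0, hp1⟩ hν₁ hν₂ hp₁ hp₂ hlow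
  -- mean decompositions
  have hMeq₁ : M₁ = L₁ + S₁ := by rw [hM₁, split₁]
  have hMeq₂ : M₂ = L₂ + S₂ := by rw [hM₂, split₂]
  -- express B in simplified form
  have hB₁' : B₁ = (p - S₁) / (1 - M₁) := by rw [hB₁, one_sub_Ioc₁, one_sub_Icc₁, ← hM₁]
  have hB₂' : B₂ = (p - S₂) / (1 - M₂) := by rw [hB₂, one_sub_Ioc₂, one_sub_Icc₂, ← hM₂]
  clear_value S₁ S₂ L₁ L₂
  clear hS₁def hS₂def hL₁def hL₂def hM₁ hM₂ hB₁ hB₂ split₁ split₂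
  clear one_sub_Ioc₁ one_sub_Ioc₂ one_sub_Icc₁ one_sub_Icc₂ hν₁ hν₂ hp₁ hp₂ hlow hhigh
  -- positivity facts
  have hM₁pos : 0 < M₁ := by linarith [mul_pos hθ0 hp0]
  have hM₂pos : 0 < M₂ := by linarith [mul_pos hθ0 hp0]
  have h1M₁pos : 0 < 1 - M₁ := by linarith [mul_pos (sub_pos.2 hθ1) (sub_pos.2 hp1)]
  have h1M₂pos : 0 < 1 - M₂ := by linarith [mul_pos (sub_pos.2 hθ1) (sub_pos.2 hp1)]
  have hK₁ : 0 ≤ 1 - p - L₁ := by linarith [mul_pos (sub_pos.2 hθ1) (sub_pos.2 hp1)]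
  have hK₂ : 0 ≤ 1 - p - L₂ := by linarith [mul_pos (sub_pos.2 hθ1) (sub_pos.2 hp1)]
  -- bounds and orderings of the four points
  have hb₁ : 0 ≤ B₁ := by
    rw [hB₁']
    exact div_nonneg (by linarith) h1M₁pos.le
  have hbb : B₁ ≤ B₂ := by
    rw [hB₁', hB₂', div_le_div_iff₀ h1M₁pos h1M₂pos]
    nlinarith [mul_le_mul (by linarith : p - S₁ ≤ p - S₂)
      (by linarith : 1 - p - L₂ ≤ 1 - p - L₁) hK₂ (by linarith : (0:ℝ) ≤ p - S₂)]
  have hpM₂ : p * M₂ ≤ S₂ := by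
    nlinarith [mul_le_mul_of_nonneg_left hL₂ub hp0.le,
      mul_le_mul_of_nonneg_right hS₂lb (by linarith : (0:ℝ) ≤ 1 - p)]
  have hba : B₂ ≤ A₂ := by
    have h1 : B₂ ≤ p := by
      rw [hB₂', div_le_iff₀ h1M₂pos]
      nlinarith
    have h2 : p ≤ A₂ := by
      rw [hA₂, le_div_iff₀ hM₂pos]
      exact hpM₂
    linarith
  have haa : A₂ ≤ A₁ := by
    rw [hA₁, hA₂, div_le_div_iff₀ hM₂pos hM₁pos]
    nlinarith [mul_le_mul hS hL hL₁lb (by nlinarith [mul_pos hθ0 hp0] : (0:ℝ) ≤ S₁)]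
  have ha₁ : A₁ ≤ 1 := by
    rw [hA₁, div_le_one hM₁pos]
    linarith
  -- equal means
  have hmean : M₁ * A₁ + (1 - M₁) * B₁ = M₂ * A₂ + (1 - M₂) * B₂ := by
    rw [hA₁, hA₂, hB₁', hB₂']
    field_simp
    ring
  exact two_point_convex f hf A₁ B₁ A₂ B₂ M₁ M₂ hb₁ hbb hba haa ha₁
    hM₁pos.le (by linarith) hM₂pos.le (by linarith) hmean
end
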